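/- arXiv:2402.15155 — 9 statements merged into one kernel-verified Lean document; each statement's English description precedes it below -/
import Mathlib

section
/- A set function f : 2^M → ℝ on a finite ground set M is submodular if and only if for all S, T ⊆ M it holds that f(T) ≤ f(S) + Σ_{x ∈ T \ S} f(x | S) − Σ_{x ∈ S \ T} f(x | (S ∪ T) \ {x}). -/
open Finset

/-- A set function on subsets of a finite ground set is submodular if the marginal value of any
item with respect to a smaller set is at least its marginal value with respect to a larger set. -/
def Submodular {α : Type*} [DecidableEq α] (f : Finset α → ℝ) : Prop :=
  ∀ ⦃S T : Finset α⦄, S ⊆ T → ∀ ⦃x : α⦄, x ∉ T →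
    f (insert x T) - f T ≤ f (insert x S) - f S

lemma lem1 {α : Type*} [DecidableEq α] {f : Finset α → ℝ} (hf : Submodular f)
    (S : Finset α) (D : Finset α) (hD : Disjoint D S) :
    f (S ∪ D) ≤ f S + ∑ x ∈ D, (f (insert x S) - f S) := by
  induction D using Finset.induction_on with
  | empty => simp
  | @insert a D ha ih =>
      rcases Finset.disjoint_insert_left.mp hD with ⟨haS, hDS⟩
      have ha' : a ∉ S ∪ D := by simp [haS, ha]
      have hsub : f (insert a (S ∪ D)) - f (S ∪ D) ≤ f (insert a S) - f S :=
        hf Finset.subset_union_left ha'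
      have : S ∪ insert a D = insert a (S ∪ D) := by
        ext y; simp [or_comm, or_left_comm]
      rw [this, Finset.sum_insert ha]
      have := ih hDS
      linarith

lemma lem2 {α : Type*} [DecidableEq α] {f : Finset α → ℝ} (hf : Submodular f)
    (T : Finset α) (D : Finset α) (hD : Disjoint D T) :
    ∑ x ∈ D, (f (insert x ((T ∪ D).erase x)) - f ((T ∪ D).erase x)) ≤ f (T ∪ D) - f T := by
  induction D using Finset.induction_on with
  | empty => simp
  | @insert a D ha ih =>
      rcases Finset.disjoint_insert_left.mp hD with ⟨haT, hDT⟩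
      have ha' : a ∉ T ∪ D := by simp [haT, ha]
      have hU : T ∪ insert a D = insert a (T ∪ D) := by
        ext y; simp [or_comm, or_left_comm]
      rw [hU, Finset.sum_insert ha]
      have he : (insert a (T ∪ D)).erase a = T ∪ D := Finset.erase_insert ha'
      have hmain : ∀ x ∈ D,
          f (insert x ((insert a (T ∪ D)).erase x)) - f ((insert a (T ∪ D)).erase x)
            ≤ f (insert x ((T ∪ D).erase x)) - f ((T ∪ D).erase x) := by
        intro x hx
        have hxa : x ≠ a := fun h => ha (h ▸ hx)
        have hxU : x ∈ T ∪ D := Finset.mem_union_right _ hx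
        have hsubset : (T ∪ D).erase x ⊆ (insert a (T ∪ D)).erase x :=
          Finset.erase_subset_erase _ (Finset.subset_insert _ _)
        have hxnot : x ∉ (insert a (T ∪ D)).erase x := Finset.notMem_erase _ _
        exact hf hsubset hxnot
      have hsum : ∑ x ∈ D, (f (insert x ((insert a (T ∪ D)).erase x)) - f ((insert a (T ∪ D)).erase x))
          ≤ ∑ x ∈ D, (f (insert x ((T ∪ D).erase x)) - f ((T ∪ D).erase x)) :=
        Finset.sum_le_sum hmain
      have hins : f (insert a ((insert a (T ∪ D)).erase a)) - f ((insert a (T ∪ D)).erase a)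
          = f (insert a (T ∪ D)) - f (T ∪ D) := by
        rw [he]
      have hih := ih hDT
      rw [he]
      linarith

lemma step {α : Type*} [DecidableEq α] {f : Finset α → ℝ}
    (h : ∀ S T : Finset α,
        f T ≤ f S + (∑ x ∈ T \ S, (f (insert x S) - f S))
          - ∑ x ∈ S \ T, (f (insert x ((S ∪ T).erase x)) - f ((S ∪ T).erase x)))
    {A : Finset α} {x y : α} (hx : x ∉ A) (hy : y ∉ A) (hxy : x ≠ y) :
    f (insert x (insert y A)) - f (insert y A) ≤ f (insert x A) - f A := by
  have := h A (insert x (insert y A))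
  have hdiff : insert x (insert y A) \ A = insert x {y} := by
    ext z
    simp only [Finset.mem_sdiff, Finset.mem_insert, Finset.mem_singleton]
    constructor
    · rintro ⟨h1 | h1 | h1, h2⟩ <;> tauto
    · rintro (rfl | rfl) <;> tauto
  have hdiff2 : A \ insert x (insert y A) = ∅ := by
    rw [Finset.sdiff_eq_empty_iff_subset]
    intro z hz; simp [hz]
  rw [hdiff, hdiff2, Finset.sum_insert (by simp [hxy]), Finset.sum_singleton] at this
  simp only [Finset.sum_empty] at this
  linarith

lemma back {α : Type*} [DecidableEq α] {f : Finset α → ℝ}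
    (h : ∀ S T : Finset α,
        f T ≤ f S + (∑ x ∈ T \ S, (f (insert x S) - f S))
          - ∑ x ∈ S \ T, (f (insert x ((S ∪ T).erase x)) - f ((S ∪ T).erase x))) :
    Submodular f := by
  intro A B hAB x hxB
  -- induction on card (B \ A)
  have key : ∀ n : ℕ, ∀ A B : Finset α, A ⊆ B → x ∉ B → (B \ A).card = n →
      f (insert x B) - f B ≤ f (insert x A) - f A := by
    intro n
    induction n with
    | zero =>
        intro A B hAB hxB hcard
        have : B \ A = ∅ := Finset.card_eq_zero.mp hcard
        have : B = A := Finset.Subset.antisymm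
          (fun z hz => by
            by_contra hzA
            have : z ∈ B \ A := Finset.mem_sdiff.mpr ⟨hz, hzA⟩
            simp [‹B \ A = ∅›] at this) hAB
        subst this; exact le_refl _
    | succ n ih =>
        intro A B hAB hxB hcard
        have hne : (B \ A).Nonempty := Finset.card_pos.mp (by omega)
        obtain ⟨y, hy⟩ := hne
        rw [Finset.mem_sdiff] at hy
        obtain ⟨hyB, hyA⟩ := hy
        have hsub : insert y A ⊆ B := Finset.insert_subset hyB hAB
        have hcard' : (B \ insert y A).card = n := by
          have : B \ insert y A = (B \ A).erase y := by
            ext z; simp [Finset.mem_sdiff, and_comm, not_or]; tauto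
          rw [this, Finset.card_erase_of_mem (Finset.mem_sdiff.mpr ⟨hyB, hyA⟩), hcard]; omega
        have h1 : f (insert x B) - f B ≤ f (insert x (insert y A)) - f (insert y A) :=
          ih (insert y A) B hsub hxB hcard'
        have hxy : x ≠ y := fun hh => hxB (hh ▸ hyB)
        have hxA : x ∉ A := fun hh => hxB (hAB hh)
        have h2 := step h hxA hyA hxy
        linarith
  exact key (B \ A).card A B hAB hxB rfl

/-- A set function `f` on a finite ground set is submodular iff for all `S`, `T`,
`f(T) ≤ f(S) + ∑_{x ∈ T \ S} f(x | S) − ∑_{x ∈ S \ T} f(x | (S ∪ T) \ {x})`. -/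
theorem stmt_0 {α : Type*} [DecidableEq α] [Fintype α] (f : Finset α → ℝ) :
    Submodular f ↔
      ∀ S T : Finset α,
        f T ≤ f S + (∑ x ∈ T \ S, (f (insert x S) - f S))
          - ∑ x ∈ S \ T, (f (insert x ((S ∪ T).erase x)) - f ((S ∪ T).erase x)) := by
  constructor
  · intro hf S T
    have hU1 : S ∪ (T \ S) = S ∪ T := Finset.union_sdiff_self_eq_union
    have hU2 : T ∪ (S \ T) = S ∪ T := by
      rw [Finset.union_sdiff_self_eq_union, Finset.union_comm]
    have h1 := lem1 hf S (T \ S) (Finset.sdiff_disjoint)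
    rw [hU1] at h1
    have h2 := lem2 hf T (S \ T) (Finset.sdiff_disjoint)
    rw [hU2] at h2
    linarith
  · exact back
end

section
/- Sampling lemma: Let g : 2^M → ℝ≥0 be a non-negative submodular function on a finite set M, let p ∈ [0,1], and let Y be a random subset of M (on any finite probability space, with arbitrary correlations) such that Pr[x ∈ Y] ≤ p for every x ∈ M. Then E[g(Y)] ≥ (1 − p) · g(∅). -/
open Finset

/-- Abel-summation style bound: if `Q` is a nonnegative antitone sequence and `G` is
nonnegative, then `∑ i < n, Q i * (G (i+1) - G i) ≥ -(Q 0 * G 0)`. -/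
lemma abel_aux : ∀ (n : ℕ) (Q G : ℕ → ℝ), (∀ i, 0 ≤ Q i) → (∀ i, Q (i+1) ≤ Q i) →
    (∀ i, 0 ≤ G i) → -(Q 0 * G 0) ≤ ∑ i ∈ Finset.range n, Q i * (G (i+1) - G i) := by
  intro n
  induction n with
  | zero =>
    intro Q G hQ hQa hG
    simpa using neg_nonpos.mpr (mul_nonneg (hQ 0) (hG 0))
  | succ n ih =>
    intro Q G hQ hQa hG
    rw [Finset.sum_range_succ']
    have h := ih (fun i => Q (i+1)) (fun i => G (i+1)) (fun i => hQ _) (fun i => hQa _)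
      (fun i => hG _)
    have h1 : Q 1 * G 1 ≤ Q 0 * G 1 := mul_le_mul_of_nonneg_right (hQa 0) (hG 1)
    have : -(Q 1 * G 1) ≤ ∑ i ∈ Finset.range n, Q (i+1) * (G (i+2) - G (i+1)) := h
    nlinarith [this, h1]

/-- Sampling lemma: if `g` is a non-negative submodular function on a finite ground set, `Y` is a
random subset of the ground set (over any finite probability space `Ω` with mass function `μ`, with
arbitrary correlations) such that `Pr[x ∈ Y] ≤ p` for every item `x`, with `p ∈ [0,1]`, then
`E[g(Y)] ≥ (1 − p) · g(∅)`. -/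
theorem stmt_4 {α : Type*} [DecidableEq α] [Fintype α] {Ω : Type*} [Fintype Ω]
    (g : Finset α → ℝ) (hg0 : ∀ S : Finset α, 0 ≤ g S) (hsub : Submodular g)
    (p : ℝ) (hp0 : 0 ≤ p) (hp1 : p ≤ 1)
    (μ : Ω → ℝ) (hμ0 : ∀ ω : Ω, 0 ≤ μ ω) (hμ1 : ∑ ω : Ω, μ ω = 1)
    (Y : Ω → Finset α)
    (hmarg : ∀ x : α, ∑ ω ∈ Finset.univ.filter (fun ω => x ∈ Y ω), μ ω ≤ p) :
    (1 - p) * g ∅ ≤ ∑ ω : Ω, μ ω * g (Y ω) := by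
  classical
  set q : α → ℝ := fun x => ∑ ω ∈ Finset.univ.filter (fun ω => x ∈ Y ω), μ ω with hqdef
  have hq0 : ∀ x, 0 ≤ q x := fun x => Finset.sum_nonneg fun ω _ => hμ0 ω
  have hqp : ∀ x, q x ≤ p := fun x => hmarg x
  set n := Fintype.card α with hn
  set e₀ : Fin n ≃ α := (Fintype.equivFin α).symm with he₀
  set σ : Equiv.Perm (Fin n) := Tuple.sort (fun i => -q (e₀ i)) with hσ
  set e : Fin n ≃ α := σ.trans e₀ with he
  have hanti : ∀ i j : Fin n, i ≤ j → q (e j) ≤ q (e i) := by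
    intro i j hij
    have h := Tuple.monotone_sort (fun i => -q (e₀ i)) hij
    simp only [Function.comp_apply] at h
    have : -q (e₀ (σ i)) ≤ -q (e₀ (σ j)) := h
    simp only [he, Equiv.trans_apply]
    linarith
  set V : ℕ → Finset α := fun k => Finset.univ.filter (fun x => ((e.symm x : Fin n) : ℕ) < k)
    with hV
  have hV0 : V 0 = ∅ := by simp [hV]
  have hVtop : ∀ k, n ≤ k → V k = Finset.univ := by
    intro k hk
    apply Finset.filter_true_of_mem
    intro x _
    exact lt_of_lt_of_le (e.symm x).isLt hk
  have hVnotmem : ∀ (k : ℕ) (h : k < n), e ⟨k, h⟩ ∉ V k := by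
    intro k h
    simp [hV]
  have hVins : ∀ (k : ℕ) (h : k < n), V (k+1) = insert (e ⟨k, h⟩) (V k) := by
    intro k h
    ext x
    simp only [hV, Finset.mem_filter, Finset.mem_univ, true_and, Finset.mem_insert]
    constructor
    · intro hx
      rcases Nat.lt_succ_iff_lt_or_eq.mp hx with h' | h'
      · exact Or.inr (by simpa using h')
      · left
        have : e.symm x = ⟨k, h⟩ := Fin.ext h'
        rw [← this, Equiv.apply_symm_apply]
    · rintro (rfl | hx)
      · simp
      · omega
  set G : ℕ → ℝ := fun k => g (V k) with hG
  set b : α → ℝ := fun x => G ((e.symm x : ℕ) + 1) - G (e.symm x : ℕ) with hb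
  -- key pointwise lower bound
  have key : ∀ S : Finset α, g ∅ + ∑ x ∈ S, b x ≤ g S := by
    intro S
    have step : ∀ k : ℕ, g ∅ + ∑ x ∈ S ∩ V k, b x ≤ g (S ∩ V k) := by
      intro k
      induction k with
      | zero => simp [hV0]
      | succ k ih =>
        by_cases h : k < n
        · set a := e ⟨k, h⟩ with ha
          have hins : V (k+1) = insert a (V k) := hVins k h
          have hnm : a ∉ V k := hVnotmem k h
          by_cases haS : a ∈ S
          · have hSins : S ∩ V (k+1) = insert a (S ∩ V k) := by
              rw [hins, Finset.inter_insert_of_mem haS]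
            have hnm' : a ∉ S ∩ V k := fun hx => hnm (Finset.mem_of_mem_inter_right hx)
            rw [hSins, Finset.sum_insert hnm']
            have hsubm : g (insert a (V k)) - g (V k) ≤
                g (insert a (S ∩ V k)) - g (S ∩ V k) :=
              hsub Finset.inter_subset_right hnm
            have hba : b a = g (V (k+1)) - g (V k) := by
              simp only [hb, ha, Equiv.symm_apply_apply, hG]
            rw [hba, hins]
            linarith
          · have hSins : S ∩ V (k+1) = S ∩ V k := by
              rw [hins, Finset.inter_insert_of_notMem haS]
            rw [hSins]; exact ih
        · have : V (k+1) = V k := by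
            rw [hVtop k (le_of_not_gt h), hVtop (k+1) (by omega)]
          rw [this]; exact ih
    have := step n
    rwa [hVtop n le_rfl, Finset.inter_univ] at this
  -- expectation of the linear lower bound
  have hexp : ∀ ω, μ ω * (g ∅ + ∑ x ∈ Y ω, b x) ≤ μ ω * g (Y ω) :=
    fun ω => mul_le_mul_of_nonneg_left (key (Y ω)) (hμ0 ω)
  have hsum1 : ∑ ω : Ω, μ ω * (g ∅ + ∑ x ∈ Y ω, b x) ≤ ∑ ω : Ω, μ ω * g (Y ω) :=
    Finset.sum_le_sum fun ω _ => hexp ω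
  -- compute the left side
  have hswap : ∑ ω : Ω, μ ω * ∑ x ∈ Y ω, b x = ∑ x : α, q x * b x := by
    have h1 : ∀ ω : Ω, μ ω * ∑ x ∈ Y ω, b x = ∑ x : α, if x ∈ Y ω then μ ω * b x else 0 := by
      intro ω
      rw [Finset.mul_sum, ← Finset.sum_filter, Finset.filter_univ_mem]
    simp_rw [h1]
    rw [Finset.sum_comm]
    congr 1
    ext x
    rw [← Finset.sum_filter]
    simp only [hqdef]
    rw [Finset.sum_mul]
  -- reindex over Fin n
  set Q : ℕ → ℝ := fun k => if h : k < n then q (e ⟨k, h⟩) else 0 with hQdef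
  have hreindex : ∑ x : α, q x * b x = ∑ k ∈ Finset.range n, Q k * (G (k+1) - G k) := by
    rw [← Equiv.sum_comp e (fun x => q x * b x)]
    rw [← Fin.sum_univ_eq_sum_range (fun k => Q k * (G (k+1) - G k)) n]
    apply Finset.sum_congr rfl
    intro i _
    simp only [hb, Equiv.symm_apply_apply, hQdef, i.isLt, dif_pos, Fin.eta]
  have hQ0 : ∀ i, 0 ≤ Q i := by
    intro i
    simp only [hQdef]
    split
    · exact hq0 _
    · exact le_refl 0
  have hQa : ∀ i, Q (i+1) ≤ Q i := by
    intro i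
    by_cases h : i + 1 < n
    · have h' : i < n := by omega
      simp only [hQdef, dif_pos h, dif_pos h']
      exact hanti ⟨i, h'⟩ ⟨i+1, h⟩ (by simp [Fin.le_def])
    · simp only [hQdef, dif_neg h]
      exact hQ0 i
  have hGnn : ∀ i, 0 ≤ G i := fun i => hg0 _
  have habel := abel_aux n Q G hQ0 hQa hGnn
  have hQ0p : Q 0 ≤ p := by
    simp only [hQdef]
    split
    · exact hqp _
    · exact hp0
  have hG0 : G 0 = g ∅ := by rw [hG]; simp only [hV0]
  have hfin : -(p * g ∅) ≤ ∑ k ∈ Finset.range n, Q k * (G (k+1) - G k) := by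
    refine le_trans ?_ habel
    have : Q 0 * G 0 ≤ p * g ∅ := by
      rw [hG0]
      exact mul_le_mul_of_nonneg_right hQ0p (hg0 ∅)
    linarith
  -- put everything together
  have hleft : ∑ ω : Ω, μ ω * (g ∅ + ∑ x ∈ Y ω, b x)
      = g ∅ + ∑ k ∈ Finset.range n, Q k * (G (k+1) - G k) := by
    simp_rw [mul_add]
    rw [Finset.sum_add_distrib, ← Finset.sum_mul, hμ1, one_mul, hswap, hreindex]
  linarith [hsum1, hleft ▸ hsum1]
end

section
/- (Theorem 4.1) Consider the greedy round-robin process for an agent with a normalized monotone submodular objective f and a p-system constraint I on a finite ground set, against n − 1 other agents. Let S be the agent's final set. Then for every O ∈ I with O contained in the set of items available at the agent's first turn, f(S) ≥ f(O) / (n + p). In particular f(S) ≥ OPT⁻ / (n + p), where OPT⁻ is the maximum of f over independent sets of items available at the agent's first turn. -/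
open Finset

/-- `A` is a basis of `S` w.r.t. the independence predicate `Indep`:
a maximal independent subset of `S`. -/
def IsBasisIn {α : Type*} [DecidableEq α] (Indep : Finset α → Prop) (S A : Finset α) : Prop :=
  A ⊆ S ∧ Indep A ∧ ∀ x ∈ S, x ∉ A → ¬ Indep (insert x A)

/-- The agent's solution just before their `r`-th pick: the set of the first `r` picked items. -/
def solAt {α : Type*} [DecidableEq α] (pick : ℕ → α) (r : ℕ) : Finset α :=
  (Finset.range r).image pick

lemma marg_sum {α : Type*} [DecidableEq α] (f : Finset α → ℝ) (hsub : Submodular f)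
    (T D : Finset α) : f (T ∪ D) - f T ≤ ∑ x ∈ D, (f (insert x T) - f T) := by
  classical
  induction D using Finset.induction_on with
  | empty => simp
  | @insert a D' ha ih =>
    rw [Finset.sum_insert ha]
    by_cases haT : a ∈ T ∪ D'
    · have haT' : a ∈ T := (Finset.mem_union.1 haT).resolve_right ha
      have h1 : T ∪ insert a D' = T ∪ D' := by
        rw [Finset.union_insert, Finset.insert_eq_self.2 haT]
      rw [h1, Finset.insert_eq_self.2 haT']
      linarith
    · have h2 : f (insert a (T ∪ D')) - f (T ∪ D') ≤ f (insert a T) - f T :=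
        hsub Finset.subset_union_left haT
      rw [Finset.union_insert]
      linarith

lemma exists_basis_superset {α : Type*} [DecidableEq α] (Indep : Finset α → Prop)
    (G X : Finset α) (hX : Indep X) (hXG : X ⊆ G) :
    ∃ B, X ⊆ B ∧ IsBasisIn Indep G B := by
  classical
  set 𝒜 := G.powerset.filter (fun A => X ⊆ A ∧ Indep A) with h𝒜
  have hne : 𝒜.Nonempty := ⟨X, by simp [h𝒜, Finset.mem_powerset, hXG, hX]⟩
  obtain ⟨B, hB, hBmax⟩ := 𝒜.exists_max_image Finset.card hne
  simp only [h𝒜, Finset.mem_filter, Finset.mem_powerset] at hB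
  refine ⟨B, hB.2.1, hB.1, hB.2.2, ?_⟩
  intro x hxG hxB hcontra
  have hmem : insert x B ∈ 𝒜 := by
    simp only [h𝒜, Finset.mem_filter, Finset.mem_powerset]
    exact ⟨Finset.insert_subset hxG hB.1, hB.2.1.trans (Finset.subset_insert _ _), hcontra⟩
  have := hBmax _ hmem
  rw [Finset.card_insert_of_notMem hxB] at this
  omega

lemma charge_sum {α : Type*} [DecidableEq α] (s : ℕ) (D : Finset α) (g : ℕ → ℝ) (t : α → ℕ)
    (C : ℝ) (hC : 0 ≤ C)
    (hdec : ∀ r, g (r + 1) ≤ g r)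
    (hzero : ∀ r, s ≤ r → g r = 0)
    (ht : ∀ x ∈ D, t x < s)
    (hcount : ∀ r < s, ((D.filter fun x => t x ≤ r).card : ℝ) ≤ C * (r + 1)) :
    ∑ x ∈ D, g (t x) ≤ C * ∑ r ∈ Finset.range s, g r := by
  classical
  have tel : ∀ a, a < s → g a = ∑ r ∈ Finset.range s, if a ≤ r then g r - g (r + 1) else 0 := by
    intro a ha
    have h1 : ∑ r ∈ Finset.range s, (if a ≤ r then g r - g (r+1) else 0)
        = ∑ r ∈ Finset.Ico a s, (g r - g (r+1)) := by
      rw [Finset.range_eq_Ico, ← Finset.sum_filter]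
      congr 1
      ext r
      simp only [Finset.mem_filter, Finset.mem_Ico]
      omega
    rw [h1, Finset.sum_Ico_eq_sub _ (le_of_lt ha), Finset.sum_range_sub' g, Finset.sum_range_sub' g,
      hzero s le_rfl]
    ring
  calc ∑ x ∈ D, g (t x)
      = ∑ x ∈ D, ∑ r ∈ Finset.range s, (if t x ≤ r then g r - g (r+1) else 0) :=
        Finset.sum_congr rfl fun x hx => tel (t x) (ht x hx)
    _ = ∑ r ∈ Finset.range s, ∑ x ∈ D, (if t x ≤ r then g r - g (r+1) else 0) := Finset.sum_comm
    _ = ∑ r ∈ Finset.range s, (g r - g (r+1)) * ((D.filter fun x => t x ≤ r).card : ℝ) := by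
        refine Finset.sum_congr rfl fun r _ => ?_
        rw [← Finset.sum_filter, Finset.sum_const, nsmul_eq_mul, mul_comm]
    _ ≤ ∑ r ∈ Finset.range s, (g r - g (r+1)) * (C * (r+1)) := by
        refine Finset.sum_le_sum fun r hr => ?_
        exact mul_le_mul_of_nonneg_left (hcount r (Finset.mem_range.1 hr))
          (sub_nonneg.2 (hdec r))
    _ = C * ∑ r ∈ Finset.range s, (g r - g (r+1)) * ((r:ℝ)+1) := by
        rw [Finset.mul_sum]
        exact Finset.sum_congr rfl fun r _ => by ring
    _ = C * ∑ r ∈ Finset.range s, g r := by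
        congr 1
        have h : ∀ r ∈ Finset.range s, (g r - g (r+1)) * ((r:ℝ)+1)
            = ((fun k => g k * (k:ℝ)) r - (fun k => g k * (k:ℝ)) (r+1)) + g r := by
          intro r _
          push_cast
          ring
        rw [Finset.sum_congr rfl h, Finset.sum_add_distrib,
          Finset.sum_range_sub' (fun k => g k * (k:ℝ)), hzero s le_rfl]
        simp

/-- Theorem 4.1: in the greedy round-robin process of an agent with a normalized monotone
submodular objective `f` and a `p`-system constraint `Indep` against `n − 1` other agents
(turn `r` of the agent has availability `avail r`, at which the agent greedily adds `pick r`;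
between consecutive turns the pick plus at most `n − 1` further items disappear; the process ends
at a turn where no available item can feasibly be added), the final solution `S = solAt pick s`
satisfies `f(S) ≥ f(O) / (n + p)` for every independent set `O` contained in the items available
at the agent's first turn; in particular `f(S) ≥ OPT⁻ / (n + p)`. -/
theorem stmt_5 {α : Type*} [DecidableEq α] [Fintype α]
    (f : Finset α → ℝ) (Indep : Finset α → Prop) (p : ℝ) (n : ℕ)
    (hn : 1 ≤ n) (hp : 1 ≤ p)
    (hnorm : f ∅ = 0)
    (hmono : ∀ ⦃S T : Finset α⦄, S ⊆ T → f S ≤ f T)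
    (hsub : Submodular f)
    (hempty : Indep ∅)
    (hdown : ∀ ⦃X Y : Finset α⦄, X ⊆ Y → Indep Y → Indep X)
    (hPsys : ∀ S A B : Finset α, IsBasisIn Indep S A → IsBasisIn Indep S B →
      (B.card : ℝ) ≤ p * (A.card : ℝ))
    (s : ℕ) (pick : ℕ → α) (avail : ℕ → Finset α)
    (hmem : ∀ r < s, pick r ∈ avail r)
    (hfeas : ∀ r < s, Indep (insert (pick r) (solAt pick r)))
    (hgreedy : ∀ r < s, ∀ x ∈ avail r, Indep (insert x (solAt pick r)) →
      f (insert x (solAt pick r)) - f (solAt pick r) ≤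
        f (insert (pick r) (solAt pick r)) - f (solAt pick r))
    (hrem : ∀ r < s, avail (r + 1) ⊆ (avail r).erase (pick r))
    (hbound : ∀ r < s, (avail r \ avail (r + 1)).card ≤ n)
    (hstop : ∀ x ∈ avail s, ¬ Indep (insert x (solAt pick s)))
    (O : Finset α) (hO : Indep O) (hOavail : O ⊆ avail 0) :
    f O / ((n : ℝ) + p) ≤ f (solAt pick s) := by
  classical
  have solAt_succ : ∀ r, solAt pick (r+1) = insert (pick r) (solAt pick r) := by
    intro r; simp [solAt, Finset.range_add_one]
  have solMono : ∀ {i j : ℕ}, i ≤ j → solAt pick i ⊆ solAt pick j := by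
    intro i j h
    exact Finset.image_subset_image (Finset.range_subset_range.2 h)
  have solCard : ∀ r, (solAt pick r).card ≤ r := fun r =>
    le_trans Finset.card_image_le (by simp)
  have sol0 : solAt pick 0 = ∅ := by simp [solAt]
  have availMono : ∀ {i j : ℕ}, i ≤ j → j ≤ s → avail j ⊆ avail i := by
    intro i j h hj
    induction j with
    | zero =>
      have : i = 0 := by omega
      subst this; exact subset_rfl
    | succ k ih =>
      rcases Nat.eq_or_lt_of_le h with rfl | h'
      · exact subset_rfl
      · exact (hrem k (by omega)).trans ((Finset.erase_subset _ _).trans (ih (by omega) (by omega)))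
  have pickNotIn : ∀ k, k < s → pick k ∉ avail (k+1) := by
    intro k hk hmemq
    exact (Finset.notMem_erase _ _) (hrem k hk hmemq)
  have indepSol : ∀ r, r ≤ s → Indep (solAt pick r) := by
    intro r
    cases r with
    | zero => intro _; rw [sol0]; exact hempty
    | succ k => intro h; rw [solAt_succ]; exact hfeas k (by omega)
  have pickDistinct : ∀ r, r < s → pick r ∉ solAt pick r := by
    intro r hr hmem'
    obtain ⟨k, hk, hpk⟩ := Finset.mem_image.1 hmem'
    have hk' : k < r := Finset.mem_range.1 hk
    have h1 : pick r ∈ avail r := hmem r hr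
    have h2 : avail r ⊆ avail (k+1) := availMono (by omega) (by omega)
    exact pickNotIn k (by omega) (hpk ▸ h2 h1)
  set g : ℕ → ℝ := fun r => if r < s then f (solAt pick (r+1)) - f (solAt pick r) else 0 with hg
  have gzero : ∀ r, s ≤ r → g r = 0 := by
    intro r h
    simp only [hg]
    rw [if_neg (by omega)]
  have gnn : ∀ r, 0 ≤ g r := by
    intro r
    by_cases h : r < s
    · simp only [hg]
      rw [if_pos h]
      have := hmono (solMono (Nat.le_succ r))
      linarith
    · rw [gzero r (by omega)]
  have gdec : ∀ r, g (r+1) ≤ g r := by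
    intro r
    by_cases h1 : r + 1 < s
    · have hr : r < s := by omega
      have hx : pick (r+1) ∈ avail r := availMono (Nat.le_succ r) (by omega) (hmem (r+1) h1)
      have hxS : pick (r+1) ∉ solAt pick (r+1) := pickDistinct (r+1) h1
      have hfe : Indep (insert (pick (r+1)) (solAt pick r)) :=
        hdown (Finset.insert_subset_insert _ (solMono (Nat.le_succ r))) (hfeas (r+1) h1)
      have h2 : f (insert (pick (r+1)) (solAt pick (r+1))) - f (solAt pick (r+1))
          ≤ f (insert (pick (r+1)) (solAt pick r)) - f (solAt pick r) :=
        hsub (solMono (Nat.le_succ r)) hxS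
      have h3 := hgreedy r hr (pick (r+1)) hx hfe
      have e1 : g (r+1) = f (insert (pick (r+1)) (solAt pick (r+1))) - f (solAt pick (r+1)) := by
        simp only [hg]
        rw [if_pos h1, solAt_succ]
      have e2 : g r = f (insert (pick r) (solAt pick r)) - f (solAt pick r) := by
        simp only [hg]
        rw [if_pos hr, solAt_succ]
      rw [e1, e2]
      linarith
    · rw [gzero (r+1) (by omega)]
      exact gnn r
  have gsum : ∑ r ∈ Finset.range s, g r = f (solAt pick s) := by
    have h : ∀ r ∈ Finset.range s, g r = f (solAt pick (r+1)) - f (solAt pick r) := by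
      intro r hr
      simp only [hg]
      rw [if_pos (Finset.mem_range.1 hr)]
    rw [Finset.sum_congr rfl h, Finset.sum_range_sub (fun r => f (solAt pick r)), sol0, hnorm,
      sub_zero]
  have fSnn : 0 ≤ f (solAt pick s) := by
    rw [← hnorm]
    exact hmono (Finset.empty_subset _)
  set D := O \ solAt pick s with hD
  set t : α → ℕ := fun x =>
    if hx : ∃ r, x ∉ avail r ∨ ¬ Indep (insert x (solAt pick r)) then Nat.find hx - 1 else 0
    with htdef
  have key : ∀ x ∈ D, t x < s ∧ x ∈ avail (t x) ∧ Indep (insert x (solAt pick (t x))) ∧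
      (x ∉ avail (t x + 1) ∨ ¬ Indep (insert x (solAt pick (t x + 1)))) := by
    intro x hxD
    have hxO : x ∈ O := (Finset.mem_sdiff.1 hxD).1
    have hPs : x ∉ avail s ∨ ¬ Indep (insert x (solAt pick s)) := by
      by_cases h : x ∈ avail s
      · exact Or.inr (hstop x h)
      · exact Or.inl h
    have hex : ∃ r, x ∉ avail r ∨ ¬ Indep (insert x (solAt pick r)) := ⟨s, hPs⟩
    have ht : t x = Nat.find hex - 1 := by
      simp only [htdef]
      rw [dif_pos hex]
    have hP0 : ¬ (x ∉ avail 0 ∨ ¬ Indep (insert x (solAt pick 0))) := by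
      push_neg
      refine ⟨hOavail hxO, ?_⟩
      rw [sol0]
      exact hdown (by simp [Finset.insert_subset_iff, hxO]) hO
    have hfind_pos : 0 < Nat.find hex := by
      rcases Nat.eq_zero_or_pos (Nat.find hex) with h0 | h
      · exact absurd (h0 ▸ Nat.find_spec hex) hP0
      · exact h
    have hfind_le : Nat.find hex ≤ s := Nat.find_min' hex hPs
    have hlt : t x < s := by omega
    have hnot : ¬ (x ∉ avail (t x) ∨ ¬ Indep (insert x (solAt pick (t x)))) := by
      rw [ht]
      exact Nat.find_min hex (by omega)
    push_neg at hnot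
    have hsucc : t x + 1 = Nat.find hex := by omega
    exact ⟨hlt, hnot.1, hnot.2, by rw [hsucc]; exact Nat.find_spec hex⟩
  have hcount : ∀ r < s, ((D.filter fun x => t x ≤ r).card : ℝ) ≤ ((n:ℝ) - 1 + p) * (r+1) := by
    intro r hr
    set D1 := D.filter (fun x => x ∉ avail (r+1)) with hD1
    set D2 := D.filter (fun x => ¬ Indep (insert x (solAt pick (r+1)))) with hD2
    have hsub' : (D.filter fun x => t x ≤ r) ⊆ D1 ∪ D2 := by
      intro x hx
      obtain ⟨hxD, hxt⟩ := Finset.mem_filter.1 hx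
      obtain ⟨hlt, hav, hind, hdead⟩ := key x hxD
      rcases hdead with h | h
      · refine Finset.mem_union_left _ (Finset.mem_filter.2 ⟨hxD, fun hc => h ?_⟩)
        exact availMono (by omega) (by omega) hc
      · refine Finset.mem_union_right _ (Finset.mem_filter.2 ⟨hxD, fun hc => h ?_⟩)
        exact hdown (Finset.insert_subset_insert _ (solMono (by omega))) hc
    have hD1card : (D1.card : ℝ) ≤ ((n:ℝ) - 1) * (r+1) := by
      have hnat : ∀ k, k ≤ s → ((avail 0 \ avail k) \ solAt pick k).card ≤ (n-1) * k := by
        intro k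
        induction k with
        | zero => intro _; simp
        | succ m ih =>
          intro hms
          have h1 : ((avail 0 \ avail (m+1)) \ solAt pick (m+1)) ⊆
              (((avail 0 \ avail m) \ solAt pick m) ∪ ((avail m \ avail (m+1)).erase (pick m))) := by
            intro x hx
            simp only [Finset.mem_sdiff, Finset.mem_union, Finset.mem_erase] at hx ⊢
            obtain ⟨⟨hx0, hxm1⟩, hxS⟩ := hx
            rw [solAt_succ] at hxS
            by_cases hxa : x ∈ avail m
            · exact Or.inr ⟨fun hc => hxS (hc ▸ Finset.mem_insert_self _ _), hxa, hxm1⟩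
            · exact Or.inl ⟨⟨hx0, hxa⟩, fun hc => hxS (Finset.mem_insert_of_mem hc)⟩
          have h2 : ((avail m \ avail (m+1)).erase (pick m)).card ≤ n - 1 := by
            have hpm : pick m ∈ avail m \ avail (m+1) :=
              Finset.mem_sdiff.2 ⟨hmem m (by omega), pickNotIn m (by omega)⟩
            rw [Finset.card_erase_of_mem hpm]
            exact Nat.sub_le_sub_right (hbound m (by omega)) 1
          calc ((avail 0 \ avail (m+1)) \ solAt pick (m+1)).card
              ≤ (((avail 0 \ avail m) \ solAt pick m) ∪
                  ((avail m \ avail (m+1)).erase (pick m))).card := Finset.card_le_card h1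
            _ ≤ ((avail 0 \ avail m) \ solAt pick m).card +
                  ((avail m \ avail (m+1)).erase (pick m)).card := Finset.card_union_le _ _
            _ ≤ (n-1) * m + (n-1) := add_le_add (ih (by omega)) h2
            _ = (n-1) * (m+1) := by ring
      have hsubD1 : D1 ⊆ (avail 0 \ avail (r+1)) \ solAt pick (r+1) := by
        intro x hx
        obtain ⟨hxD, hxa⟩ := Finset.mem_filter.1 hx
        obtain ⟨hxO, hxS⟩ := Finset.mem_sdiff.1 hxD
        exact Finset.mem_sdiff.2 ⟨Finset.mem_sdiff.2 ⟨hOavail hxO, hxa⟩,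
          fun hc => hxS (solMono (by omega) hc)⟩
      have hle : D1.card ≤ (n-1)*(r+1) :=
        le_trans (Finset.card_le_card hsubD1) (hnat (r+1) (by omega))
      calc (D1.card : ℝ) ≤ (((n-1)*(r+1) : ℕ) : ℝ) := by exact_mod_cast hle
        _ = ((n:ℝ)-1)*(r+1) := by
            rw [Nat.cast_mul, Nat.cast_sub hn]
            push_cast
            ring
    have hD2card : (D2.card : ℝ) ≤ p * (r+1) := by
      have hD2O : D2 ⊆ O := (Finset.filter_subset _ _).trans Finset.sdiff_subset
      have hIndD2 : Indep D2 := hdown hD2O hO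
      obtain ⟨B, hDB, hB⟩ := exists_basis_superset Indep (solAt pick (r+1) ∪ D2) D2 hIndD2
        Finset.subset_union_right
      have hAbasis : IsBasisIn Indep (solAt pick (r+1) ∪ D2) (solAt pick (r+1)) := by
        refine ⟨Finset.subset_union_left, indepSol (r+1) (by omega), ?_⟩
        intro x hx hxS
        rcases Finset.mem_union.1 hx with h | h
        · exact absurd h hxS
        · exact (Finset.mem_filter.1 h).2
      have hps := hPsys _ _ _ hAbasis hB
      have hcard : (D2.card : ℝ) ≤ (B.card : ℝ) := by exact_mod_cast Finset.card_le_card hDB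
      have hSc : ((solAt pick (r+1)).card : ℝ) ≤ ((r:ℝ)+1) := by
        have := solCard (r+1)
        exact_mod_cast this
      have hp0 : (0:ℝ) ≤ p := by linarith
      calc (D2.card:ℝ) ≤ (B.card : ℝ) := hcard
        _ ≤ p * ((solAt pick (r+1)).card : ℝ) := hps
        _ ≤ p * ((r:ℝ)+1) := mul_le_mul_of_nonneg_left hSc hp0
    calc ((D.filter fun x => t x ≤ r).card : ℝ)
        ≤ ((D1 ∪ D2).card : ℝ) := by exact_mod_cast Finset.card_le_card hsub'
      _ ≤ (D1.card : ℝ) + (D2.card : ℝ) := by exact_mod_cast Finset.card_union_le _ _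
      _ ≤ ((n:ℝ)-1)*(r+1) + p*(r+1) := add_le_add hD1card hD2card
      _ = ((n:ℝ)-1+p)*(r+1) := by ring
  have hmargsum : f O ≤ f (solAt pick s) + ∑ x ∈ D, (f (insert x (solAt pick s)) - f (solAt pick s)) := by
    have h1 : f O ≤ f (solAt pick s ∪ D) := by
      apply hmono
      rw [hD, Finset.union_sdiff_self_eq_union]
      exact Finset.subset_union_right
    have h2 := marg_sum f hsub (solAt pick s) D
    linarith
  have hstep : ∀ x ∈ D, f (insert x (solAt pick s)) - f (solAt pick s) ≤ g (t x) := by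
    intro x hxD
    obtain ⟨hlt, hav, hind, _⟩ := key x hxD
    have hxS : x ∉ solAt pick s := (Finset.mem_sdiff.1 hxD).2
    have h1 : f (insert x (solAt pick s)) - f (solAt pick s) ≤
        f (insert x (solAt pick (t x))) - f (solAt pick (t x)) :=
      hsub (solMono (by omega)) hxS
    have h2 := hgreedy (t x) hlt x hav hind
    have e : g (t x) = f (insert (pick (t x)) (solAt pick (t x))) - f (solAt pick (t x)) := by
      simp only [hg]
      rw [if_pos hlt, solAt_succ]
    rw [e]
    linarith
  have hn1 : (1:ℝ) ≤ (n:ℝ) := by exact_mod_cast hn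
  have hCpos : (0:ℝ) ≤ (n:ℝ) - 1 + p := by linarith
  have hchain : ∑ x ∈ D, (f (insert x (solAt pick s)) - f (solAt pick s))
      ≤ ((n:ℝ)-1+p) * f (solAt pick s) := by
    calc ∑ x ∈ D, (f (insert x (solAt pick s)) - f (solAt pick s))
        ≤ ∑ x ∈ D, g (t x) := Finset.sum_le_sum hstep
      _ ≤ ((n:ℝ)-1+p) * ∑ r ∈ Finset.range s, g r :=
          charge_sum s D g t _ hCpos gdec gzero (fun x hx => (key x hx).1) hcount
      _ = ((n:ℝ)-1+p) * f (solAt pick s) := by rw [gsum]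
  have hpos : (0:ℝ) < (n:ℝ) + p := by linarith
  rw [div_le_iff₀ hpos]
  nlinarith [hmargsum, hchain, fSnn]
end

section
/- (Theorem 4.3) Let n ≥ 2. Consider the greedy round-robin process for an agent with a normalized monotone submodular objective f and a cardinality constraint I = {S : |S| ≤ k} on a finite ground set, against n − 1 other agents. Let S be the agent's final set. Then for every O with |O| ≤ k contained in the set of items available at the agent's first turn, f(S) ≥ f(O) / n. -/
open Finset

lemma solAt_zero {α : Type*} [DecidableEq α] (pick : ℕ → α) : solAt pick 0 = ∅ := by
  simp [solAt]

lemma solAt_succ {α : Type*} [DecidableEq α] (pick : ℕ → α) (r : ℕ) :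
    solAt pick (r + 1) = insert (pick r) (solAt pick r) := by
  simp [solAt, Finset.range_add_one]

lemma solAt_mono {α : Type*} [DecidableEq α] (pick : ℕ → α) {r r' : ℕ} (h : r ≤ r') :
    solAt pick r ⊆ solAt pick r' :=
  Finset.image_subset_image (Finset.range_subset_range.2 h)

lemma card_solAt_le {α : Type*} [DecidableEq α] (pick : ℕ → α) (r : ℕ) :
    (solAt pick r).card ≤ r :=
  le_trans (Finset.card_image_le) (by simp)

/-- Submodular union bound: `f (S ∪ O) ≤ f S + ∑_{o ∈ O \ S} (f (insert o S) - f S)`. -/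
lemma submod_union_bound {α : Type*} [DecidableEq α] {f : Finset α → ℝ} (hsub : Submodular f)
    (S : Finset α) (O : Finset α) :
    f (S ∪ O) ≤ f S + ∑ o ∈ O \ S, (f (insert o S) - f S) := by
  classical
  induction O using Finset.induction with
  | empty => simp
  | @insert a O' ha ih =>
    by_cases haS : a ∈ S
    · have h1 : S ∪ insert a O' = S ∪ O' := by
        rw [Finset.union_insert, Finset.insert_eq_self.2 (Finset.mem_union_left _ haS)]
      rw [h1, Finset.insert_sdiff_of_mem _ haS]
      exact ih
    · by_cases haO : a ∈ O'
      · have h1 : insert a O' = O' := Finset.insert_eq_self.2 haO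
        rw [h1]; exact ih
      · have hnot : a ∉ S ∪ O' := by simp [haS, haO]
        have h2 : f (insert a (S ∪ O')) - f (S ∪ O') ≤ f (insert a S) - f S :=
          hsub Finset.subset_union_left hnot
        have h3 : insert a O' \ S = insert a (O' \ S) := by
          ext x; simp only [Finset.mem_sdiff, Finset.mem_insert]
          constructor
          · rintro ⟨(rfl | hx), hxS⟩
            · exact Or.inl rfl
            · exact Or.inr ⟨hx, hxS⟩
          · rintro (rfl | ⟨hx, hxS⟩)
            · exact ⟨Or.inl rfl, haS⟩
            · exact ⟨Or.inr hx, hxS⟩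
        have h4 : a ∉ O' \ S := by simp [haO]
        rw [Finset.union_insert, h3, Finset.sum_insert h4]
        linarith

/-- Theorem 4.3: let `n ≥ 2`. In the greedy round-robin process of an agent with a normalized
monotone submodular objective `f` and a cardinality constraint `|S| ≤ k` against `n − 1` other
agents (at each turn, if the solution is not full and items remain, the agent adds an available
item of maximum marginal value; the pick plus at most `n − 1` further items disappear between
consecutive turns; the process ends when the solution is full or no items remain), the final
solution `S = solAt pick s` satisfies `f(S) ≥ f(O) / n` for every `O` with `|O| ≤ k` contained in
the items available at the agent's first turn. -/
theorem stmt_7 {α : Type*} [DecidableEq α] [Fintype α]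
    (f : Finset α → ℝ) (k : ℕ) (n : ℕ) (hn : 2 ≤ n)
    (hnorm : f ∅ = 0)
    (hmono : ∀ ⦃S T : Finset α⦄, S ⊆ T → f S ≤ f T)
    (hsub : Submodular f)
    (s : ℕ) (pick : ℕ → α) (avail : ℕ → Finset α)
    (hmem : ∀ r < s, pick r ∈ avail r)
    (hcard : ∀ r < s, (solAt pick r).card < k)
    (hgreedy : ∀ r < s, ∀ x ∈ avail r,
      f (insert x (solAt pick r)) - f (solAt pick r) ≤
        f (insert (pick r) (solAt pick r)) - f (solAt pick r))
    (hrem : ∀ r < s, avail (r + 1) ⊆ (avail r).erase (pick r))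
    (hbound : ∀ r < s, (avail r \ avail (r + 1)).card ≤ n)
    (hstop : (solAt pick s).card = k ∨ avail s = ∅)
    (O : Finset α) (hO : O.card ≤ k) (hOavail : O ⊆ avail 0) :
    f O / (n : ℝ) ≤ f (solAt pick s) := by
  classical
  have hn0 : (0 : ℝ) < (n : ℝ) := by positivity
  rw [div_le_iff₀ hn0]
  have hfS0 : 0 ≤ f (solAt pick s) := by
    rw [← hnorm]; exact hmono (Finset.empty_subset _)
  -- trivial case s = 0
  rcases Nat.eq_zero_or_pos s with hs0 | hs
  · subst hs0
    have hOempty : O = ∅ := by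
      rcases hstop with h | h
      · rw [solAt_zero] at h
        simp at h
        subst h
        exact Finset.card_eq_zero.1 (Nat.le_zero.1 hO)
      · exact Finset.subset_empty.1 (h ▸ hOavail)
    subst hOempty
    rw [hnorm]
    positivity
  -- main case
  set S := solAt pick s with hSdef
  -- availability is antitone
  have havail : ∀ r r', r ≤ r' → r' ≤ s → avail r' ⊆ avail r := by
    intro r r' hle hr's
    induction r' , hle using Nat.le_induction with
    | base => exact Finset.Subset.refl _
    | succ m hm ih =>
      intro x hx
      exact ih (by omega) (Finset.mem_of_mem_erase (hrem m (by omega) hx))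
  -- available items are never in the current solution
  have hdisj : ∀ r ≤ s, ∀ x ∈ avail r, x ∉ solAt pick r := by
    intro r
    induction r with
    | zero => intro _ x _ ; simp [solAt_zero]
    | succ m ih =>
      intro hms x hx
      have hx' := hrem m (by omega) hx
      have hxm : x ∈ avail m := Finset.mem_of_mem_erase hx'
      have hxne : x ≠ pick m := Finset.ne_of_mem_erase hx'
      rw [solAt_succ]
      simp only [Finset.mem_insert, not_or]
      exact ⟨hxne, ih (by omega) x hxm⟩
  -- the greedy gains
  set Δ : ℕ → ℝ := fun r => f (solAt pick (r + 1)) - f (solAt pick r) with hΔdef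
  have hΔnn : ∀ r, 0 ≤ Δ r := by
    intro r
    have := hmono (solAt_mono pick (Nat.le_succ r))
    simp only [hΔdef]; linarith
  have hΔstep : ∀ r, r + 1 < s → Δ (r + 1) ≤ Δ r := by
    intro r hr
    have h1 : pick (r + 1) ∈ avail (r + 1) := hmem _ hr
    have h2 : pick (r + 1) ∈ avail r :=
      Finset.mem_of_mem_erase (hrem r (by omega) h1)
    have h3 : pick (r + 1) ∉ solAt pick (r + 1) := hdisj (r + 1) (by omega) _ h1
    have h4 : f (insert (pick (r+1)) (solAt pick (r+1))) - f (solAt pick (r+1)) ≤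
        f (insert (pick (r+1)) (solAt pick r)) - f (solAt pick r) :=
      hsub (solAt_mono pick (Nat.le_succ r)) h3
    have h5 := hgreedy r (by omega) _ h2
    have e1 : f (solAt pick (r + 1 + 1)) = f (insert (pick (r + 1)) (solAt pick (r + 1))) := by
      rw [solAt_succ]
    have e2 : f (solAt pick (r + 1)) = f (insert (pick r) (solAt pick r)) := by
      rw [solAt_succ]
    simp only [hΔdef]
    linarith [h4, h5, e1, e2]
  have hΔle : ∀ a b, a ≤ b → b < s → Δ b ≤ Δ a := by
    intro a b hab hbs
    induction b, hab using Nat.le_induction with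
    | base => exact le_refl _
    | succ m hm ih => exact le_trans (hΔstep m hbs) (ih (by omega))
  -- marginal bound for available items
  have hmarg : ∀ r, r < s → ∀ o ∈ avail r, o ∉ S →
      f (insert o S) - f S ≤ Δ r := by
    intro r hr o ho hoS
    have h1 : f (insert o S) - f S ≤ f (insert o (solAt pick r)) - f (solAt pick r) :=
      hsub (solAt_mono pick (le_of_lt hr)) hoS
    have h2 := hgreedy r hr o ho
    simp only [hΔdef]
    rw [solAt_succ]
    linarith
  -- removal round
  set g : α → ℕ := fun o => sInf {r | o ∉ avail (r + 1)} with hgdef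
  have hgspec : ∀ o ∈ O, o ∉ avail s →
      o ∈ avail (g o) ∧ o ∉ avail (g o + 1) ∧ g o < s := by
    intro o hoO hos
    have hmemset : s - 1 ∈ {r | o ∉ avail (r + 1)} := by
      simp only [Set.mem_setOf_eq]
      rwa [Nat.sub_add_cancel hs]
    have hne : {r | o ∉ avail (r + 1)}.Nonempty := ⟨s - 1, hmemset⟩
    have h1 : o ∉ avail (g o + 1) := Nat.sInf_mem hne
    have h2 : g o ≤ s - 1 := Nat.sInf_le hmemset
    have h3 : o ∈ avail (g o) := by
      rcases Nat.eq_zero_or_pos (g o) with h | h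
      · rw [h]; exact hOavail hoO
      · have hlt : g o - 1 < sInf {r | o ∉ avail (r + 1)} := by
          have : sInf {r | o ∉ avail (r + 1)} = g o := rfl
          omega
        have hnm := Nat.notMem_of_lt_sInf hlt
        simp only [Set.mem_setOf_eq, not_not] at hnm
        rwa [Nat.sub_add_cancel h] at hnm
    exact ⟨h3, h1, by omega⟩
  -- set of valuable leftover items
  set U : Finset α := O \ S with hUdef
  set T : Finset α := U.filter (fun o => o ∈ avail s) with hTdef
  set R : Finset α := U.filter (fun o => o ∉ avail s) with hRdef
  -- fiber cardinality bounds
  have hRmaps : ∀ o ∈ R, g o ∈ Finset.range s := by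
    intro o ho
    simp only [hRdef, Finset.mem_filter, hUdef, Finset.mem_sdiff] at ho
    exact Finset.mem_range.2 (hgspec o ho.1.1 ho.2).2.2
  have hfiber_sub : ∀ r < s, R.filter (fun o => g o = r) ⊆
      ((avail r \ avail (r + 1)).erase (pick r)) := by
    intro r hr o ho
    simp only [Finset.mem_filter, hRdef, hUdef, Finset.mem_sdiff] at ho
    obtain ⟨⟨⟨hoO, hoS⟩, hos⟩, hgo⟩ := ho
    obtain ⟨h1, h2, h3⟩ := hgspec o hoO hos
    rw [hgo] at h1 h2
    have hpickS : pick r ∈ S := by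
      have : pick r ∈ solAt pick (r + 1) := by rw [solAt_succ]; exact Finset.mem_insert_self _ _
      exact solAt_mono pick (by omega) this
    refine Finset.mem_erase.2 ⟨?_, Finset.mem_sdiff.2 ⟨h1, h2⟩⟩
    intro heq
    exact hoS (heq ▸ hpickS)
  have hfiber_card : ∀ r < s, (R.filter (fun o => g o = r)).card ≤ n - 1 := by
    intro r hr
    have hpick_in : pick r ∈ avail r \ avail (r + 1) := by
      refine Finset.mem_sdiff.2 ⟨hmem r hr, ?_⟩
      intro h
      exact (Finset.ne_of_mem_erase (hrem r hr h)) rfl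
    have h1 : ((avail r \ avail (r + 1)).erase (pick r)).card
        = (avail r \ avail (r + 1)).card - 1 := Finset.card_erase_of_mem hpick_in
    have h2 := hbound r hr
    have := Finset.card_le_card (hfiber_sub r hr)
    omega
  -- bound the removed-items sum
  have hRsum : ∑ o ∈ R, (f (insert o S) - f S) ≤
      ∑ r ∈ Finset.range s, ((R.filter (fun o => g o = r)).card : ℝ) * Δ r := by
    rw [← Finset.sum_fiberwise_of_maps_to hRmaps (fun o => f (insert o S) - f S)]
    refine Finset.sum_le_sum ?_
    intro r hr
    rw [Finset.mem_range] at hr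
    have : ∀ o ∈ R.filter (fun o => g o = r), f (insert o S) - f S ≤ Δ r := by
      intro o ho
      simp only [Finset.mem_filter, hRdef, hUdef, Finset.mem_sdiff] at ho
      obtain ⟨⟨⟨hoO, hoS⟩, hos⟩, hgo⟩ := ho
      obtain ⟨h1, _, _⟩ := hgspec o hoO hos
      exact hmarg r hr o (hgo ▸ h1) hoS
    have h := Finset.sum_le_card_nsmul _ _ _ this
    rwa [nsmul_eq_mul] at h
  -- bound the surviving-items sum
  have hTsum : ∑ o ∈ T, (f (insert o S) - f S) ≤ (T.card : ℝ) * Δ (s - 1) := by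
    have : ∀ o ∈ T, f (insert o S) - f S ≤ Δ (s - 1) := by
      intro o ho
      simp only [Finset.mem_filter, hTdef, hUdef, Finset.mem_sdiff] at ho
      obtain ⟨⟨hoO, hoS⟩, hos⟩ := ho
      have h1 : o ∈ avail (s - 1) := havail (s - 1) s (by omega) le_rfl hos
      exact hmarg (s - 1) (by omega) o h1 hoS
    have h := Finset.sum_le_card_nsmul _ _ _ this
    rwa [nsmul_eq_mul] at h
  -- total count bound
  have hRcount : (R.card : ℕ) = ∑ r ∈ Finset.range s, (R.filter (fun o => g o = r)).card :=
    Finset.card_eq_sum_card_fiberwise hRmaps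
  have hUpart : T.card + R.card = U.card := by
    simp only [hTdef, hRdef]
    exact Finset.card_filter_add_card_filter_not _
  -- total-capacity bound
  have hTle : (T.card : ℝ) ≤ ((n : ℝ) - 1) * s - (R.card : ℝ) := by
    have hRle : R.card ≤ s * (n - 1) := by
      rw [hRcount]
      calc ∑ r ∈ Finset.range s, (R.filter (fun o => g o = r)).card
          ≤ ∑ _r ∈ Finset.range s, (n - 1) :=
            Finset.sum_le_sum (fun r hr => hfiber_card r (Finset.mem_range.1 hr))
        _ = s * (n - 1) := by rw [Finset.sum_const, Finset.card_range, smul_eq_mul]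
    rcases hstop with hk | hempty
    · -- solution is full: |U| ≤ k = |S| ≤ s
      have hUle : U.card ≤ s := by
        have h1 : U.card ≤ O.card := Finset.card_le_card (Finset.sdiff_subset)
        have h2 := card_solAt_le pick s
        have hSS : S.card = (solAt pick s).card := rfl
        omega
      have hSS : S.card = (solAt pick s).card := rfl
      have h3 : T.card + R.card ≤ s := by omega
      have h4 : (T.card : ℝ) + (R.card : ℝ) ≤ (s : ℝ) := by exact_mod_cast h3
      have h5 : (s : ℝ) ≤ ((n : ℝ) - 1) * s := by
        have : (1 : ℝ) ≤ (n : ℝ) - 1 := by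
          have : (2 : ℝ) ≤ (n : ℝ) := by exact_mod_cast hn
          linarith
        nlinarith [Nat.cast_nonneg (α := ℝ) s]
      linarith
    · -- items ran out: T = ∅
      have hTe : T = ∅ := by
        simp only [hTdef, hempty]
        simp
      rw [hTe]
      simp only [Finset.card_empty, Nat.cast_zero]
      have : (R.card : ℝ) ≤ ((s * (n - 1) : ℕ) : ℝ) := by exact_mod_cast hRle
      have hcast : ((s * (n - 1) : ℕ) : ℝ) = (s : ℝ) * ((n : ℝ) - 1) := by
        have h1 : (1 : ℕ) ≤ n := by omega
        push_cast [h1]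
        ring
      linarith [this, hcast ▸ this]
  -- key inequality
  have hkey : (T.card : ℝ) * Δ (s - 1) +
      ∑ r ∈ Finset.range s, ((R.filter (fun o => g o = r)).card : ℝ) * Δ r ≤
      ((n : ℝ) - 1) * ∑ r ∈ Finset.range s, Δ r := by
    have hcast : ∀ r < s, ((R.filter (fun o => g o = r)).card : ℝ) ≤ (n : ℝ) - 1 := by
      intro r hr
      have h1 := hfiber_card r hr
      have h2 : ((R.filter (fun o => g o = r)).card : ℝ) ≤ ((n - 1 : ℕ) : ℝ) := by
        exact_mod_cast h1
      have h3 : ((n - 1 : ℕ) : ℝ) = (n : ℝ) - 1 := by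
        have : (1 : ℕ) ≤ n := by omega
        push_cast [this]; ring
      linarith
    have hterm : ∀ r ∈ Finset.range s,
        ((n : ℝ) - 1 - ((R.filter (fun o => g o = r)).card : ℝ)) * Δ (s - 1) ≤
        ((n : ℝ) - 1 - ((R.filter (fun o => g o = r)).card : ℝ)) * Δ r := by
      intro r hr
      rw [Finset.mem_range] at hr
      have hc := hcast r hr
      have hΔr : Δ (s - 1) ≤ Δ r := hΔle r (s - 1) (by omega) (by omega)
      nlinarith
    have hsum1 : ∑ r ∈ Finset.range s,
        ((n : ℝ) - 1 - ((R.filter (fun o => g o = r)).card : ℝ)) * Δ (s - 1) ≤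
        ∑ r ∈ Finset.range s,
        ((n : ℝ) - 1 - ((R.filter (fun o => g o = r)).card : ℝ)) * Δ r :=
      Finset.sum_le_sum hterm
    have hsumcast : ∑ r ∈ Finset.range s, ((R.filter (fun o => g o = r)).card : ℝ)
        = (R.card : ℝ) := by
      rw [hRcount]
      push_cast
      ring
    have hlhs : ∑ r ∈ Finset.range s,
        ((n : ℝ) - 1 - ((R.filter (fun o => g o = r)).card : ℝ)) * Δ (s - 1)
        = (((n : ℝ) - 1) * s - (R.card : ℝ)) * Δ (s - 1) := by
      rw [← Finset.sum_mul]
      congr 1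
      rw [Finset.sum_sub_distrib, Finset.sum_const, Finset.card_range, hsumcast,
        nsmul_eq_mul]
      ring
    have hrhs : ∑ r ∈ Finset.range s,
        ((n : ℝ) - 1 - ((R.filter (fun o => g o = r)).card : ℝ)) * Δ r
        = ((n : ℝ) - 1) * (∑ r ∈ Finset.range s, Δ r)
          - ∑ r ∈ Finset.range s, ((R.filter (fun o => g o = r)).card : ℝ) * Δ r := by
      rw [Finset.mul_sum, ← Finset.sum_sub_distrib]
      exact Finset.sum_congr rfl (fun r _ => by ring)
    have hT2 : (T.card : ℝ) * Δ (s - 1) ≤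
        (((n : ℝ) - 1) * s - (R.card : ℝ)) * Δ (s - 1) := by
      have := hΔnn (s - 1)
      nlinarith [hTle]
    calc (T.card : ℝ) * Δ (s - 1) +
        ∑ r ∈ Finset.range s, ((R.filter (fun o => g o = r)).card : ℝ) * Δ r
        ≤ (((n : ℝ) - 1) * s - (R.card : ℝ)) * Δ (s - 1)
          + ∑ r ∈ Finset.range s, ((R.filter (fun o => g o = r)).card : ℝ) * Δ r := by
          linarith [hT2]
      _ = (∑ r ∈ Finset.range s,
            ((n : ℝ) - 1 - ((R.filter (fun o => g o = r)).card : ℝ)) * Δ (s - 1))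
          + ∑ r ∈ Finset.range s, ((R.filter (fun o => g o = r)).card : ℝ) * Δ r := by
          rw [hlhs]
      _ ≤ (∑ r ∈ Finset.range s,
            ((n : ℝ) - 1 - ((R.filter (fun o => g o = r)).card : ℝ)) * Δ r)
          + ∑ r ∈ Finset.range s, ((R.filter (fun o => g o = r)).card : ℝ) * Δ r := by
          linarith [hsum1]
      _ = ((n : ℝ) - 1) * ∑ r ∈ Finset.range s, Δ r := by
          rw [hrhs]; ring
  -- telescoping
  have htel : ∑ r ∈ Finset.range s, Δ r = f S := by
    have := Finset.sum_range_sub (fun i => f (solAt pick i)) s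
    simp only [hΔdef]
    rw [this, solAt_zero, hnorm]
    simp [hSdef]
  -- total marginal bound
  have hUsum : ∑ o ∈ U, (f (insert o S) - f S) ≤ ((n : ℝ) - 1) * f S := by
    have hsplit : ∑ o ∈ T, (f (insert o S) - f S) + ∑ o ∈ R, (f (insert o S) - f S)
        = ∑ o ∈ U, (f (insert o S) - f S) := by
      simp only [hTdef, hRdef]
      exact Finset.sum_filter_add_sum_filter_not U _ _
    calc ∑ o ∈ U, (f (insert o S) - f S)
        = ∑ o ∈ T, (f (insert o S) - f S) + ∑ o ∈ R, (f (insert o S) - f S) := hsplit.symm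
      _ ≤ (T.card : ℝ) * Δ (s - 1) +
          ∑ r ∈ Finset.range s, ((R.filter (fun o => g o = r)).card : ℝ) * Δ r := by
          linarith [hTsum, hRsum]
      _ ≤ ((n : ℝ) - 1) * ∑ r ∈ Finset.range s, Δ r := hkey
      _ = ((n : ℝ) - 1) * f S := by rw [htel]
  -- conclude
  have hOS : f O ≤ f (S ∪ O) := hmono Finset.subset_union_right
  have hunion := submod_union_bound hsub S O
  have : f O ≤ (n : ℝ) * f S := by
    have : ∑ o ∈ O \ S, (f (insert o S) - f S) ≤ ((n : ℝ) - 1) * f S := by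
      simpa [hUdef] using hUsum
    linarith
  calc f O ≤ (n : ℝ) * f S := this
    _ = f S * (n : ℝ) := by ring
end

section
/- (Lemma 5.2) In the two-solution simultaneous greedy round-robin process for an agent with a normalized non-negative submodular objective f and a p-system constraint I against n − 1 other agents, let S₁, S₂ be the final sets, let x_r denote the r-th item added overall, τ(r) ∈ {1,2} the index of the solution to which x_r was added, and S_t^(r) (t ∈ {1,2}) the two sets just before x_r was added. Let O ∈ I be contained in the items available at the agent's first turn, and let Z = {x ∈ O : f(x | S₁) < 0 and f(x | S₂) < 0}. Then there exists a map δ : O \ Z → S₁ ∪ S₂ such that: (1) if δ(x) = x_r then f(x | S_t^(r)) ≤ f(x_r | S_{τ(r)}^(r)) for both t ∈ {1,2}; and (2) |δ⁻¹(x_r)| ≤ n + p for every x_r ∈ S₁ ∪ S₂. -/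
/-!
Call `x` a candidate at step `r` if it is still available and can be added to both current
solutions; candidacy is inherited by earlier steps, and the deadline of `x` is its last candidate
step. Greedy choice bounds the marginal of `x`, against either solution before step `r`, by that of
`pick r` whenever `r` is at most the deadline of `x`. An item of `O` that is no longer a candidate
at step `r` was either removed by another agent during the first `r` turns (at most `r (n - 1)`
items) or is spanned by one of the two solutions before step `r` (at most `p r` items, by the
`p`-system property). So at most `r (n + ⌊p⌋)` items of `O` have deadline below `r`, and Hall's
theorem sends every item to a pick no later than its deadline, with at most `n + ⌊p⌋` items per
pick.
-/

open Finset

/-- In the two-solution simultaneous greedy process, `sol2 pick slot t r` is solution `t` just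
before the agent's `r`-th pick: the items among the first `r` picks assigned to slot `t`. -/
def sol2 {α : Type*} [DecidableEq α] (pick : ℕ → α) (slot : ℕ → Fin 2) (t : Fin 2) (r : ℕ) :
    Finset α :=
  ((Finset.range r).filter fun j => slot j = t).image pick

section Independence

variable {α : Type*} [DecidableEq α] {Indep : Finset α → Prop}

theorem exists_isBasisIn_superset {S C : Finset α} (hCS : C ⊆ S) (hC : Indep C) :
    ∃ B, C ⊆ B ∧ IsBasisIn Indep S B := by
  classical
  obtain ⟨B, hB, hBmax⟩ := exists_max_image {B ∈ S.powerset | C ⊆ B ∧ Indep B} card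
    ⟨C, mem_filter.mpr ⟨mem_powerset.mpr hCS, subset_rfl, hC⟩⟩
  obtain ⟨hBS, hCB, hBI⟩ := mem_filter.mp hB
  refine ⟨B, hCB, mem_powerset.mp hBS, hBI, fun x hxS hxB hI => ?_⟩
  have hle := hBmax (insert x B) (mem_filter.mpr ⟨mem_powerset.mpr
    (insert_subset hxS (mem_powerset.mp hBS)), hCB.trans (subset_insert x B), hI⟩)
  rw [card_insert_of_notMem hxB] at hle
  omega

variable (Indep) in
open Classical in
noncomputable def spannedIn (O A : Finset α) : Finset α :=
  {y ∈ O | y ∈ A ∨ ¬ Indep (insert y A)}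

open Classical in
theorem mem_spannedIn {O A : Finset α} {y : α} :
    y ∈ spannedIn Indep O A ↔ y ∈ O ∧ (y ∈ A ∨ ¬ Indep (insert y A)) :=
  mem_filter

theorem card_spannedIn_le {p : ℝ}
    (hPsys : ∀ S A B : Finset α, IsBasisIn Indep S A → IsBasisIn Indep S B →
      (B.card : ℝ) ≤ p * (A.card : ℝ))
    (hdown : ∀ ⦃X Y : Finset α⦄, X ⊆ Y → Indep Y → Indep X)
    {O A : Finset α} (hO : Indep O) (hA : Indep A) :
    (#(spannedIn Indep O A) : ℝ) ≤ p * #A := by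
  set C := spannedIn Indep O A
  have hAbasis : IsBasisIn Indep (A ∪ C) A := ⟨subset_union_left, hA, fun y hy hyA =>
    (mem_spannedIn.mp ((mem_union.mp hy).resolve_left hyA)).2.resolve_left hyA⟩
  obtain ⟨B, hCB, hB⟩ := exists_isBasisIn_superset subset_union_right
    (hdown (fun y hy => (mem_spannedIn.mp hy).1) hO)
  calc (#C : ℝ) ≤ #B := by exact_mod_cast card_le_card hCB
    _ ≤ p * #A := hPsys _ _ _ hAbasis hB

end Independence

theorem exists_le_and_card_fiber_le {α : Type*} (X : Finset α) (d : α → ℕ) (c : ℕ)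
    (hX : ∀ x ∈ X, #{y ∈ X | d y ≤ d x} ≤ (d x + 1) * c) :
    ∃ g : α → ℕ, (∀ x ∈ X, g x ≤ d x) ∧ ∀ r, #{x ∈ X | g x = r} ≤ c := by
  classical
  -- Hall's condition for `Y` is witnessed by the slots of its element with the largest `d`.
  let slots : X → Finset (ℕ × ℕ) := fun x => range (d x + 1) ×ˢ range c
  have hall : ∀ Y : Finset X, #Y ≤ #(Y.biUnion slots) := by
    intro Y
    rcases Y.eq_empty_or_nonempty with rfl | hY
    · simp
    obtain ⟨x, hxY, hmax⟩ := Y.exists_max_image (fun y => d y) hY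
    calc #Y ≤ #{y ∈ X | d y ≤ d x} :=
          card_le_card_of_injOn Subtype.val (fun y hy => mem_filter.mpr ⟨y.2, hmax y hy⟩)
            Subtype.val_injective.injOn
      _ ≤ (d x + 1) * c := hX x x.2
      _ = #(slots x) := by simp [slots]
      _ ≤ #(Y.biUnion slots) := card_le_card (subset_biUnion_of_mem slots hxY)
  obtain ⟨f, hf_inj, hf_mem⟩ := (all_card_le_biUnion_card_iff_exists_injective slots).mp hall
  obtain ⟨g, hg⟩ : ∃ g : α → ℕ × ℕ, ∀ x (hx : x ∈ X), g x = f ⟨x, hx⟩ :=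
    ⟨fun x => if hx : x ∈ X then f ⟨x, hx⟩ else 0, fun x hx => dif_pos hx⟩
  refine ⟨fun x => (g x).1, fun x hx => ?_, fun r => ?_⟩
  · have := (mem_product.mp (hf_mem ⟨x, hx⟩)).1
    show (g x).1 ≤ d x
    rw [hg x hx]
    simpa [Nat.lt_succ_iff] using this
  · refine (card_le_card_of_injOn (fun x => (g x).2) (t := range c) (fun x hx => ?_) ?_).trans_eq
      (card_range c)
    · obtain ⟨hx, -⟩ := mem_filter.mp hx
      simp only [mem_coe, hg x hx]
      exact (mem_product.mp (hf_mem ⟨x, hx⟩)).2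
    · intro x hx y hy hxy
      obtain ⟨hxX, rfl⟩ := mem_filter.mp hx
      obtain ⟨hyX, hyr⟩ := mem_filter.mp hy
      have : g x = g y := Prod.ext hyr.symm hxy
      rw [hg x hxX, hg y hyX] at this
      exact congrArg Subtype.val (hf_inj this)

section Sequences

variable {α : Type*} {a : ℕ → Finset α}

theorem subset_of_le_of_forall_lt_succ_subset {s : ℕ} (h : ∀ r < s, a (r + 1) ⊆ a r)
    {i j : ℕ} (hij : i ≤ j) (hjs : j ≤ s) : a j ⊆ a i := by
  induction j, hij using Nat.le_induction with
  | base => exact subset_rfl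
  | succ j _ ih => exact (h j (by omega)).trans (ih (by omega))

theorem exists_mem_notMem_succ_of_mem_zero {x : α} {r : ℕ} (h0 : x ∈ a 0) (hr : x ∉ a r) :
    ∃ j < r, x ∈ a j ∧ x ∉ a (j + 1) := by
  induction r with
  | zero => exact absurd h0 hr
  | succ r ih =>
    by_cases hx : x ∈ a r
    · exact ⟨r, r.lt_succ_self, hx, hr⟩
    · obtain ⟨j, hj, hmem⟩ := ih hx
      exact ⟨j, by omega, hmem⟩

end Sequences

section GreedyRun

variable {α : Type*} [DecidableEq α] (pick : ℕ → α) (slot : ℕ → Fin 2)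

theorem sol2_zero (t : Fin 2) : sol2 pick slot t 0 = ∅ := by
  simp [sol2]

theorem sol2_mono (t : Fin 2) {r r' : ℕ} (h : r ≤ r') :
    sol2 pick slot t r ⊆ sol2 pick slot t r' :=
  image_subset_image (filter_subset_filter _ (range_subset_range.mpr h))

theorem sol2_succ (t : Fin 2) (r : ℕ) :
    sol2 pick slot t (r + 1) =
      if slot r = t then insert (pick r) (sol2 pick slot t r) else sol2 pick slot t r := by
  unfold sol2
  rw [range_add_one, filter_insert]
  split_ifs <;> simp only [image_insert]

theorem pick_mem_sol2 {j r : ℕ} (h : j < r) : pick j ∈ sol2 pick slot (slot j) r :=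
  mem_image_of_mem pick (mem_filter.mpr ⟨mem_range.mpr h, rfl⟩)

theorem sum_card_sol2_le (r : ℕ) : ∑ t, #(sol2 pick slot t r) ≤ r :=
  calc ∑ t, #(sol2 pick slot t r) ≤ ∑ t, #{j ∈ range r | slot j = t} :=
        sum_le_sum fun _ _ => card_image_le
    _ = r := by rw [← card_eq_sum_card_fiberwise (fun j _ => mem_univ (slot j)), card_range]

variable {Indep : Finset α → Prop} {avail : ℕ → Finset α} {s : ℕ}

theorem indep_sol2 (hempty : Indep ∅)
    (hfeas : ∀ r < s, Indep (insert (pick r) (sol2 pick slot (slot r) r)))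
    (t : Fin 2) {r : ℕ} (hr : r ≤ s) : Indep (sol2 pick slot t r) := by
  induction r with
  | zero => rwa [sol2_zero]
  | succ r ih =>
    rw [sol2_succ]
    split_ifs with h
    · exact h ▸ hfeas r (by omega)
    · exact ih (by omega)

theorem injOn_pick (hmem : ∀ r < s, pick r ∈ avail r)
    (hrem : ∀ r < s, avail (r + 1) ⊆ (avail r).erase (pick r)) :
    Set.InjOn pick (Set.Iio s) := by
  have hne : ∀ i j, i < j → j < s → pick j ≠ pick i := fun i j hij hjs =>
    (mem_erase.mp (hrem i (by omega) (subset_of_le_of_forall_lt_succ_subset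
      (fun r hr => (hrem r hr).trans (erase_subset _ _)) hij hjs.le (hmem j hjs)))).1
  intro i hi j hj hij
  rcases lt_trichotomy i j with h | rfl | h
  · exact absurd hij.symm (hne i j h hj)
  · rfl
  · exact absurd hij (hne j i h hi)

theorem pick_mem_sol2_zero_union_sol2_one {j : ℕ} (h : j < s) :
    pick j ∈ sol2 pick slot 0 s ∪ sol2 pick slot 1 s := by
  have hj := pick_mem_sol2 pick slot h
  generalize slot j = t at hj
  fin_cases t
  exacts [mem_union_left _ hj, mem_union_right _ hj]

variable (avail) in
def removedByOthers (r : ℕ) : Finset α :=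
  (range r).biUnion fun j => (avail j \ avail (j + 1)).erase (pick j)

theorem card_removedByOthers_le {n : ℕ} (hmem : ∀ r < s, pick r ∈ avail r)
    (hrem : ∀ r < s, avail (r + 1) ⊆ (avail r).erase (pick r))
    (hbound : ∀ r < s, (avail r \ avail (r + 1)).card ≤ n) {r : ℕ} (hrs : r ≤ s) :
    #(removedByOthers pick avail r) ≤ r * (n - 1) := by
  refine (card_biUnion_le_card_mul _ _ _ fun j hj => ?_).trans_eq (by rw [card_range])
  have hjs : j < s := (mem_range.mp hj).trans_le hrs
  have hpick : pick j ∈ avail j \ avail (j + 1) :=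
    mem_sdiff.mpr ⟨hmem j hjs, fun h => (mem_erase.mp (hrem j hjs h)).1 rfl⟩
  rw [card_erase_of_mem hpick]
  exact Nat.sub_le_sub_right (hbound j hjs) 1

variable (Indep avail) in
def IsCandidate (x : α) (r : ℕ) : Prop :=
  x ∈ avail r ∧ ∀ t, Indep (insert x (sol2 pick slot t r))

variable (Indep avail s) in
open Classical in
noncomputable def deadline (x : α) : ℕ :=
  Nat.findGreatest (IsCandidate pick slot Indep avail x) s

theorem IsCandidate.of_le (hdown : ∀ ⦃X Y : Finset α⦄, X ⊆ Y → Indep Y → Indep X)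
    (hanti : ∀ r < s, avail (r + 1) ⊆ avail r) {x : α} {r r' : ℕ}
    (h : IsCandidate pick slot Indep avail x r) (hr' : r' ≤ r) (hrs : r ≤ s) :
    IsCandidate pick slot Indep avail x r' :=
  ⟨subset_of_le_of_forall_lt_succ_subset hanti hr' hrs h.1,
    fun t => hdown (insert_subset_insert x (sol2_mono pick slot t hr')) (h.2 t)⟩

theorem isCandidate_zero (hdown : ∀ ⦃X Y : Finset α⦄, X ⊆ Y → Indep Y → Indep X)
    {O : Finset α} (hO : Indep O) {x : α} (hxO : x ∈ O) (hx0 : x ∈ avail 0) :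
    IsCandidate pick slot Indep avail x 0 :=
  ⟨hx0, fun t => hdown (by simpa [sol2_zero] using hxO) hO⟩

open Classical in
theorem IsCandidate.of_le_deadline (hdown : ∀ ⦃X Y : Finset α⦄, X ⊆ Y → Indep Y → Indep X)
    (hanti : ∀ r < s, avail (r + 1) ⊆ avail r) {x : α} {r : ℕ}
    (h0 : IsCandidate pick slot Indep avail x 0) (hr : r ≤ deadline pick slot Indep avail s x) :
    IsCandidate pick slot Indep avail x r :=
  (Nat.findGreatest_spec (Nat.zero_le s) h0).of_le pick slot hdown hanti hr (Nat.findGreatest_le s)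

open Classical in
theorem IsCandidate.deadline_lt
    (hstop : ∀ x ∈ avail s, ∀ t : Fin 2, ¬ Indep (insert x (sol2 pick slot t s))) {x : α}
    (h0 : IsCandidate pick slot Indep avail x 0) : deadline pick slot Indep avail s x < s := by
  refine (Nat.findGreatest_le s).lt_of_ne fun hs => ?_
  have hc : IsCandidate pick slot Indep avail x s :=
    hs ▸ Nat.findGreatest_spec (Nat.zero_le s) h0
  exact hstop x hc.1 0 (hc.2 0)

open Classical in
theorem not_isCandidate_of_deadline_lt {x : α} {r : ℕ}
    (h : deadline pick slot Indep avail s x < r) (hrs : r ≤ s) :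
    ¬ IsCandidate pick slot Indep avail x r := fun hc =>
  (Nat.le_findGreatest hrs hc).not_gt h

theorem subset_removedByOthers_union_spannedIn {O X : Finset α} (hOavail : O ⊆ avail 0)
    (hXO : X ⊆ O) {r : ℕ} (hX : ∀ x ∈ X, ¬ IsCandidate pick slot Indep avail x r) :
    X ⊆ removedByOthers pick avail r ∪
      univ.biUnion fun t => spannedIn Indep O (sol2 pick slot t r) := by
  intro x hx
  by_cases hpicked : ∃ j < r, pick j = x
  · obtain ⟨j, hj, rfl⟩ := hpicked
    exact mem_union_right _ (mem_biUnion.mpr ⟨slot j, mem_univ _,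
      mem_spannedIn.mpr ⟨hXO hx, Or.inl (pick_mem_sol2 pick slot hj)⟩⟩)
  by_cases hav : x ∈ avail r
  · obtain ⟨t, ht⟩ : ∃ t, ¬ Indep (insert x (sol2 pick slot t r)) := by
      by_contra! h
      exact hX x hx ⟨hav, h⟩
    exact mem_union_right _ (mem_biUnion.mpr ⟨t, mem_univ _,
      mem_spannedIn.mpr ⟨hXO hx, Or.inr ht⟩⟩)
  · obtain ⟨j, hj, hxj, hxj'⟩ := exists_mem_notMem_succ_of_mem_zero (hOavail (hXO hx)) hav
    exact mem_union_left _ (mem_biUnion.mpr ⟨j, mem_range.mpr hj,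
      mem_erase.mpr ⟨fun h => hpicked ⟨j, hj, h.symm⟩, mem_sdiff.mpr ⟨hxj, hxj'⟩⟩⟩)

theorem card_le_of_forall_not_isCandidate {p : ℝ} {n : ℕ}
    (hPsys : ∀ S A B : Finset α, IsBasisIn Indep S A → IsBasisIn Indep S B →
      (B.card : ℝ) ≤ p * (A.card : ℝ))
    (hp : 0 ≤ p) (hn : 1 ≤ n) (hdown : ∀ ⦃X Y : Finset α⦄, X ⊆ Y → Indep Y → Indep X)
    (hempty : Indep ∅) (hfeas : ∀ r < s, Indep (insert (pick r) (sol2 pick slot (slot r) r)))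
    (hmem : ∀ r < s, pick r ∈ avail r)
    (hrem : ∀ r < s, avail (r + 1) ⊆ (avail r).erase (pick r))
    (hbound : ∀ r < s, (avail r \ avail (r + 1)).card ≤ n)
    {O : Finset α} (hO : Indep O) (hOavail : O ⊆ avail 0) {r : ℕ} (hrs : r ≤ s)
    {X : Finset α} (hXO : X ⊆ O) (hX : ∀ x ∈ X, ¬ IsCandidate pick slot Indep avail x r) :
    #X ≤ r * (n + ⌊p⌋₊) := by
  have hcover := subset_removedByOthers_union_spannedIn pick slot hOavail hXO hX
  have hremoved : (#(removedByOthers pick avail r) : ℝ) ≤ r * (n - 1) := by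
    rw [← Nat.cast_one, ← Nat.cast_sub hn, ← Nat.cast_mul]
    exact_mod_cast card_removedByOthers_le pick hmem hrem hbound hrs
  have hspanned : ∀ t, (#(spannedIn Indep O (sol2 pick slot t r)) : ℝ) ≤
      p * #(sol2 pick slot t r) := fun t =>
    card_spannedIn_le hPsys hdown hO (indep_sol2 pick slot hempty hfeas t hrs)
  have hsol : (∑ t, #(sol2 pick slot t r) : ℝ) ≤ r := by
    exact_mod_cast sum_card_sol2_le pick slot r
  suffices h : (#X : ℝ) ≤ r * (n - 1) + p * r by
    have hfloor : p * r ≤ (⌊p⌋₊ + 1) * r :=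
      mul_le_mul_of_nonneg_right (Nat.lt_floor_add_one p).le r.cast_nonneg
    have : (#X : ℝ) ≤ (r * (n + ⌊p⌋₊) : ℕ) := by
      push_cast
      linarith
    exact_mod_cast this
  calc (#X : ℝ)
      ≤ #(removedByOthers pick avail r) + ∑ t, (#(spannedIn Indep O (sol2 pick slot t r)) : ℝ) := by
        exact_mod_cast (card_le_card hcover).trans
          ((card_union_le _ _).trans (Nat.add_le_add_left card_biUnion_le _))
    _ ≤ r * (n - 1) + ∑ t, p * #(sol2 pick slot t r) :=
        add_le_add hremoved (sum_le_sum fun t _ => hspanned t)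
    _ ≤ r * (n - 1) + p * r := by
        rw [← mul_sum]
        gcongr

end GreedyRun

theorem stmt_11_general {α : Type*} [DecidableEq α]
    (f : Finset α → ℝ) (Indep : Finset α → Prop) (p : ℝ) (n : ℕ)
    (hn : 1 ≤ n) (hp : 1 ≤ p)
    (hempty : Indep ∅)
    (hdown : ∀ ⦃X Y : Finset α⦄, X ⊆ Y → Indep Y → Indep X)
    (hPsys : ∀ S A B : Finset α, IsBasisIn Indep S A → IsBasisIn Indep S B →
      (B.card : ℝ) ≤ p * (A.card : ℝ))
    (s : ℕ) (pick : ℕ → α) (slot : ℕ → Fin 2) (avail : ℕ → Finset α)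
    (hmem : ∀ r < s, pick r ∈ avail r)
    (hfeas : ∀ r < s, Indep (insert (pick r) (sol2 pick slot (slot r) r)))
    (hgreedy : ∀ r < s, ∀ x ∈ avail r, ∀ t : Fin 2, Indep (insert x (sol2 pick slot t r)) →
      f (insert x (sol2 pick slot t r)) - f (sol2 pick slot t r) ≤
        f (insert (pick r) (sol2 pick slot (slot r) r)) - f (sol2 pick slot (slot r) r))
    (hrem : ∀ r < s, avail (r + 1) ⊆ (avail r).erase (pick r))
    (hbound : ∀ r < s, (avail r \ avail (r + 1)).card ≤ n)
    (hstop : ∀ x ∈ avail s, ∀ t : Fin 2, ¬ Indep (insert x (sol2 pick slot t s)))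
    (O : Finset α) (hO : Indep O) (hOavail : O ⊆ avail 0) :
    ∀ S₁ S₂ : Finset α, S₁ = sol2 pick slot 0 s → S₂ = sol2 pick slot 1 s →
    ∀ OZ : Finset α,
      OZ = O.filter (fun x => 0 ≤ f (insert x S₁) - f S₁ ∨ 0 ≤ f (insert x S₂) - f S₂) →
    ∃ δ : α → α,
      (∀ x ∈ OZ, δ x ∈ S₁ ∪ S₂) ∧
      (∀ x ∈ OZ, ∀ r < s, δ x = pick r → ∀ t : Fin 2,
        f (insert x (sol2 pick slot t r)) - f (sol2 pick slot t r) ≤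
          f (insert (pick r) (sol2 pick slot (slot r) r)) - f (sol2 pick slot (slot r) r)) ∧
      (∀ r < s, ((OZ.filter (fun x => δ x = pick r)).card : ℝ) ≤ (n : ℝ) + p) := by
  rintro S₁ S₂ rfl rfl OZ hOZ
  have hOZO : OZ ⊆ O := hOZ ▸ filter_subset _ O
  set d := deadline pick slot Indep avail s
  have hcand : ∀ x ∈ OZ, IsCandidate pick slot Indep avail x 0 := fun x hx =>
    isCandidate_zero pick slot hdown hO (hOZO hx) (hOavail (hOZO hx))
  have hds : ∀ x ∈ OZ, d x < s := fun x hx => (hcand x hx).deadline_lt pick slot hstop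
  have hcount : ∀ x ∈ OZ, #{y ∈ OZ | d y ≤ d x} ≤ (d x + 1) * (n + ⌊p⌋₊) := fun x hx =>
    card_le_of_forall_not_isCandidate pick slot hPsys (by linarith) hn hdown hempty hfeas
      hmem hrem hbound hO hOavail (hds x hx) ((filter_subset _ OZ).trans hOZO)
      fun y hy => not_isCandidate_of_deadline_lt pick slot
        (Nat.lt_succ_of_le (mem_filter.mp hy).2) (hds x hx)
  obtain ⟨g, hgd, hfiber⟩ := exists_le_and_card_fiber_le OZ d _ hcount
  have hgs : ∀ x ∈ OZ, g x < s := fun x hx => (hgd x hx).trans_lt (hds x hx)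
  have hinj := injOn_pick pick hmem hrem
  refine ⟨fun x => pick (g x), fun x hx => ?_, fun x hx r hr hxr t => ?_, fun r hr => ?_⟩
  · exact pick_mem_sol2_zero_union_sol2_one pick slot (hgs x hx)
  · have hanti : ∀ r < s, avail (r + 1) ⊆ avail r := fun r hr =>
      (hrem r hr).trans (erase_subset _ _)
    have hgr : g x = r := hinj (hgs x hx) hr hxr
    have hc := (hcand x hx).of_le_deadline pick slot hdown hanti (hgr ▸ hgd x hx)
    exact hgreedy r hr x hc.1 t (hc.2 t)
  · calc (#{x ∈ OZ | pick (g x) = pick r} : ℝ) ≤ #{x ∈ OZ | g x = r} := by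
          refine Nat.cast_le.mpr (card_le_card fun x hx => ?_)
          obtain ⟨hx, hxr⟩ := mem_filter.mp hx
          exact mem_filter.mpr ⟨hx, hinj (hgs x hx) hr hxr⟩
      _ ≤ n + ⌊p⌋₊ := by exact_mod_cast hfiber r
      _ ≤ n + p := by gcongr; exact Nat.floor_le (by linarith)

/-- Lemma 5.2: in the two-solution simultaneous greedy round-robin process of an agent with a
normalized non-negative submodular objective `f` and a `p`-system constraint against `n − 1` other
agents, with final solutions `S₁ = sol2 pick slot 0 s` and `S₂ = sol2 pick slot 1 s`, for every
independent `O` contained in the initially available items, letting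
`Z = {x ∈ O : f(x | S₁) < 0 and f(x | S₂) < 0}`, there is a map `δ : O \ Z → S₁ ∪ S₂` such that
(1) if `δ(x) = pick r` then, for both `t ∈ {1,2}`, the marginal of `x` w.r.t. `sol2 t r` is at
most the marginal of `pick r` w.r.t. the solution it was added to, and (2) at most `n + p`
elements of `O \ Z` map to each element `pick r` of `S₁ ∪ S₂`. -/
theorem stmt_11 {α : Type*} [DecidableEq α] [Fintype α]
    (f : Finset α → ℝ) (Indep : Finset α → Prop) (p : ℝ) (n : ℕ)
    (hn : 1 ≤ n) (hp : 1 ≤ p)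
    (hnorm : f ∅ = 0)
    (hnonneg : ∀ S : Finset α, 0 ≤ f S)
    (hsub : Submodular f)
    (hempty : Indep ∅)
    (hdown : ∀ ⦃X Y : Finset α⦄, X ⊆ Y → Indep Y → Indep X)
    (hPsys : ∀ S A B : Finset α, IsBasisIn Indep S A → IsBasisIn Indep S B →
      (B.card : ℝ) ≤ p * (A.card : ℝ))
    (s : ℕ) (pick : ℕ → α) (slot : ℕ → Fin 2) (avail : ℕ → Finset α)
    (hmem : ∀ r < s, pick r ∈ avail r)
    (hfeas : ∀ r < s, Indep (insert (pick r) (sol2 pick slot (slot r) r)))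
    (hgreedy : ∀ r < s, ∀ x ∈ avail r, ∀ t : Fin 2, Indep (insert x (sol2 pick slot t r)) →
      f (insert x (sol2 pick slot t r)) - f (sol2 pick slot t r) ≤
        f (insert (pick r) (sol2 pick slot (slot r) r)) - f (sol2 pick slot (slot r) r))
    (hrem : ∀ r < s, avail (r + 1) ⊆ (avail r).erase (pick r))
    (hbound : ∀ r < s, (avail r \ avail (r + 1)).card ≤ n)
    (hstop : ∀ x ∈ avail s, ∀ t : Fin 2, ¬ Indep (insert x (sol2 pick slot t s)))
    (O : Finset α) (hO : Indep O) (hOavail : O ⊆ avail 0) :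
    ∀ S₁ S₂ : Finset α, S₁ = sol2 pick slot 0 s → S₂ = sol2 pick slot 1 s →
    ∀ OZ : Finset α,
      OZ = O.filter (fun x => 0 ≤ f (insert x S₁) - f S₁ ∨ 0 ≤ f (insert x S₂) - f S₂) →
    ∃ δ : α → α,
      (∀ x ∈ OZ, δ x ∈ S₁ ∪ S₂) ∧
      (∀ x ∈ OZ, ∀ r < s, δ x = pick r → ∀ t : Fin 2,
        f (insert x (sol2 pick slot t r)) - f (sol2 pick slot t r) ≤
          f (insert (pick r) (sol2 pick slot (slot r) r)) - f (sol2 pick slot (slot r) r)) ∧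
      (∀ r < s, ((OZ.filter (fun x => δ x = pick r)).card : ℝ) ≤ (n : ℝ) + p) :=
  stmt_11_general f Indep p n hn hp hempty hdown hPsys s pick slot avail hmem hfeas hgreedy hrem
    hbound hstop O hO hOavail
end

section
/- (Core of Theorem 6.1, p-system case) Let f be a normalized monotone submodular function on a finite set M, I a p-system on M, OPT = max_{S ∈ I} f(S), and let j_1, …, j_n be items with {j_ℓ} ∈ I ordered so that f({j_1}) ≥ f({j_2}) ≥ … ≥ f({j_n}) and such that f({j_ℓ}) is the ℓ-th largest value of f on feasible singletons (taking value 0 if fewer than ℓ feasible singletons exist). If v_1, …, v_n are reals satisfying, for every ℓ ∈ {1,…,n}, both v_ℓ ≥ f({j_ℓ}) and v_ℓ ≥ (OPT − Σ_{k=1}^{ℓ−1} f({j_k})) / (n + p), then (1/n) Σ_{ℓ=1}^{n} v_ℓ ≥ OPT / (2n + p). -/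
open Finset

/-- `topVal f P ℓ` is the `(ℓ+1)`-st largest value of `f` on singletons `{x}` with `P x`
(so `topVal f P 0` is the largest), taking value `0` if fewer such singletons exist. -/
noncomputable def topVal {α : Type*} [Fintype α] (f : Finset α → ℝ) (P : α → Prop)
    [DecidablePred P] (ℓ : ℕ) : ℝ :=
  ((((Finset.univ.filter P).val.map fun x => f {x}).sort (· ≤ ·)).reverse).getD ℓ 0

lemma topVal_nonneg {α : Type*} [Fintype α] [DecidableEq α] (f : Finset α → ℝ) (P : α → Prop)
    [DecidablePred P] (hf : ∀ x : α, 0 ≤ f {x}) (ℓ : ℕ) : 0 ≤ topVal f P ℓ := by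
  unfold topVal
  set L := ((((Finset.univ.filter P).val.map fun x => f {x}).sort (· ≤ ·)).reverse) with hL
  rcases lt_or_ge ℓ L.length with h | h
  · rw [List.getD_eq_getElem _ _ h]
    obtain ⟨a, hmem, ha⟩ : ∃ a, a ∈ L ∧ L[ℓ] = a := ⟨L[ℓ], List.getElem_mem _, rfl⟩
    rw [ha]
    rw [hL, List.mem_reverse] at hmem
    obtain ⟨x, _, hx⟩ := Multiset.mem_map.mp ((Multiset.mem_sort _).mp hmem)
    rw [← hx]; exact hf x
  · rw [List.getD_eq_default _ _ h]

/-- Core of Theorem 6.1 (p-system case): let `f` be normalized monotone submodular, `Indep` a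
`p`-system with optimum value `OPT`, and let `w ℓ = topVal f (feasible singleton) ℓ` be the
`(ℓ+1)`-st largest value of `f` on feasible singletons (padded with `0`). If reals `v 0, …, v (n−1)`
satisfy `v ℓ ≥ w ℓ` and `v ℓ ≥ (OPT − ∑_{k<ℓ} w k) / (n + p)` for every `ℓ < n`, then
`(1/n) ∑_{ℓ<n} v ℓ ≥ OPT / (2n + p)`. -/
theorem stmt_13 {α : Type*} [DecidableEq α] [Fintype α]
    (f : Finset α → ℝ) (Indep : Finset α → Prop)
    [DecidablePred fun x : α => Indep {x}]
    (p : ℝ) (hp : 1 ≤ p) (n : ℕ) (hn : 1 ≤ n)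
    (hnorm : f ∅ = 0)
    (hmono : ∀ ⦃S T : Finset α⦄, S ⊆ T → f S ≤ f T)
    (hsub : Submodular f)
    (hempty : Indep ∅)
    (hdown : ∀ ⦃X Y : Finset α⦄, X ⊆ Y → Indep Y → Indep X)
    (hPsys : ∀ S A B : Finset α, IsBasisIn Indep S A → IsBasisIn Indep S B →
      (B.card : ℝ) ≤ p * (A.card : ℝ))
    (OPT : ℝ)
    (hOPTub : ∀ S : Finset α, Indep S → f S ≤ OPT)
    (hOPTmem : ∃ S : Finset α, Indep S ∧ f S = OPT)
    (v : ℕ → ℝ)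
    (hv : ∀ ℓ < n, topVal f (fun x : α => Indep {x}) ℓ ≤ v ℓ ∧
      (OPT - ∑ k ∈ Finset.range ℓ, topVal f (fun x : α => Indep {x}) k) / ((n : ℝ) + p) ≤ v ℓ) :
    OPT / (2 * (n : ℝ) + p) ≤ (∑ ℓ ∈ Finset.range n, v ℓ) / (n : ℝ) := by
  set w : ℕ → ℝ := fun ℓ => topVal f (fun x : α => Indep {x}) ℓ with hw
  have hf0 : ∀ x : α, 0 ≤ f {x} := fun x => hnorm ▸ hmono (Finset.empty_subset _)
  have hw0 : ∀ ℓ, 0 ≤ w ℓ := fun ℓ => topVal_nonneg f _ hf0 ℓ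
  have hnpos : (0:ℝ) < n := by exact_mod_cast hn
  have hnp : (0:ℝ) < (n:ℝ) + p := by linarith
  have h2np : (0:ℝ) < 2*(n:ℝ) + p := by linarith
  set S := ∑ k ∈ Finset.range n, w k with hS
  have key : (n:ℝ) * (OPT / (2*(n:ℝ)+p)) ≤ ∑ ℓ ∈ Finset.range n, v ℓ := by
    rcases le_or_gt ((n:ℝ) * OPT / (2*(n:ℝ)+p)) S with hcase | hcase
    · have h1 : S ≤ ∑ ℓ ∈ Finset.range n, v ℓ :=
        Finset.sum_le_sum fun ℓ hℓ => (hv ℓ (Finset.mem_range.mp hℓ)).1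
      rw [mul_div_assoc] at hcase
      linarith
    · have hS' : S * (2*(n:ℝ)+p) < (n:ℝ) * OPT := (lt_div_iff₀ h2np).1 hcase
      have hbound : ∀ ℓ ∈ Finset.range n, OPT / (2*(n:ℝ)+p) ≤ v ℓ := by
        intro ℓ hℓ
        have hℓn := Finset.mem_range.mp hℓ
        have hWS : ∑ k ∈ Finset.range ℓ, w k ≤ S :=
          Finset.sum_le_sum_of_subset_of_nonneg
            (Finset.range_subset_range.mpr hℓn.le) (fun k _ _ => hw0 k)
        set W := ∑ k ∈ Finset.range ℓ, w k with hW
        have h2 : OPT / (2*(n:ℝ)+p) ≤ (OPT - W) / ((n:ℝ) + p) := by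
          rw [div_le_div_iff₀ h2np hnp]
          nlinarith [mul_le_mul_of_nonneg_right hWS h2np.le]
        exact h2.trans (hv ℓ hℓn).2
      calc (n:ℝ) * (OPT / (2*(n:ℝ)+p))
          = ∑ _ℓ ∈ Finset.range n, OPT / (2*(n:ℝ)+p) := by
            rw [Finset.sum_const, Finset.card_range, nsmul_eq_mul]
        _ ≤ ∑ ℓ ∈ Finset.range n, v ℓ := Finset.sum_le_sum hbound
  rw [le_div_iff₀ hnpos]
  linarith
end

section
/- Let f be a normalized monotone submodular function on a finite set M and I an independence system on M with optimum OPT = max_{S ∈ I} f(S). For any R ⊆ M with |R| = r, the optimum over independent sets avoiding R satisfies max{ f(S) : S ∈ I, S ∩ R = ∅ } ≥ OPT − Σ_{k=1}^{r} w_k, where w_1 ≥ w_2 ≥ … are the values f({x}) over items x with {x} ∈ I, listed in non-increasing order (with w_k = 0 if fewer than k feasible singletons exist). -/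
/-!
Let `S` be an optimal independent set; `S \ R` is independent and avoids `R`. Adding the items
of `S ∩ R` back one at a time, submodularity bounds each marginal gain by the value of the
singleton, so `f S ≤ f (S \ R) + ∑ x ∈ S ∩ R, f {x}`. The items of `S ∩ R` are at most `|R|`
feasible singletons, so their total value is at most the sum of the `|R|` largest feasible
singleton values.
-/

open Finset

lemma List.getD_le_of_forall_le {M : Type*} [Zero M] [LE M] {l : List M} {a : M}
    (hl : ∀ x ∈ l, x ≤ a) (ha : 0 ≤ a) (k : ℕ) : l.getD k 0 ≤ a := by
  rw [List.getD_eq_getElem?_getD]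
  cases h : l[k]? with
  | none => exact ha
  | some x => exact hl x (List.mem_of_getElem? h)

section

variable {M : Type*} [AddCommMonoid M] [LinearOrder M] [IsOrderedAddMonoid M]

lemma List.Pairwise.multiset_sum_le_sum_range_getD {l : List M} (hl : l.Pairwise (· ≥ ·))
    (hnonneg : ∀ x ∈ l, 0 ≤ x) {t : Multiset M} (ht : t ≤ l) {r : ℕ}
    (hr : Multiset.card t ≤ r) : t.sum ≤ ∑ k ∈ Finset.range r, l.getD k 0 := by
  induction l generalizing t r with
  | nil =>
    obtain rfl : t = 0 := Multiset.le_zero.mp ht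
    simp only [Multiset.sum_zero, List.getD_nil, sum_const_zero, le_refl]
  | cons a l ih =>
    obtain ⟨hal, hl⟩ := List.pairwise_cons.mp hl
    have ha : 0 ≤ a := hnonneg a List.mem_cons_self
    have hnonneg' : ∀ x ∈ l, 0 ≤ x := fun x hx => hnonneg x (List.mem_cons_of_mem a hx)
    cases r with
    | zero =>
      obtain rfl : t = 0 := Multiset.card_eq_zero.mp (Nat.le_zero.mp hr)
      simp
    | succ r =>
      rw [Finset.sum_range_succ', List.getD_cons_zero]
      simp only [List.getD_cons_succ]
      by_cases hat : a ∈ t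
      · have hle : t.erase a ≤ l := by simpa using Multiset.erase_le_erase a ht
        have hcard : Multiset.card (t.erase a) ≤ r := by
          have := Multiset.card_erase_lt_of_mem hat; omega
        rw [← Multiset.sum_erase hat, add_comm]
        gcongr
        exact ih hl hnonneg' hle hcard
      -- `a` dominates the tail, in particular the entry (or padding `0`) at the extra slot `r`
      · calc t.sum ≤ ∑ k ∈ Finset.range (r + 1), l.getD k 0 :=
              ih hl hnonneg' ((Multiset.le_cons_of_notMem hat).mp ht) hr
          _ = ∑ k ∈ Finset.range r, l.getD k 0 + l.getD r 0 := sum_range_succ _ _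
          _ ≤ ∑ k ∈ Finset.range r, l.getD k 0 + a := by
            gcongr
            exact List.getD_le_of_forall_le hal ha r

lemma Multiset.sum_le_sum_range_getD_sort {s t : Multiset M} (hs : ∀ x ∈ s, 0 ≤ x)
    (ht : t ≤ s) {r : ℕ} (hr : Multiset.card t ≤ r) :
    t.sum ≤ ∑ k ∈ Finset.range r, ((s.sort (· ≤ ·)).reverse).getD k 0 := by
  refine List.Pairwise.multiset_sum_le_sum_range_getD
    (List.pairwise_reverse.mpr (s.pairwise_sort _)) (by simpa using hs) ?_ hr
  rwa [Multiset.coe_reverse, Multiset.sort_eq]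

end

lemma sum_le_sum_topVal {α : Type*} [Fintype α] {f : Finset α → ℝ} {P : α → Prop}
    [DecidablePred P] (hf : ∀ x, P x → 0 ≤ f {x}) {T : Finset α} (hT : ∀ x ∈ T, P x) {r : ℕ}
    (hr : T.card ≤ r) : ∑ x ∈ T, f {x} ≤ ∑ k ∈ Finset.range r, topVal f P k := by
  refine Multiset.sum_le_sum_range_getD_sort ?_ (Multiset.map_le_map ?_) ?_
  · simpa using hf
  · exact Finset.val_le_iff.mpr fun x hx => by simpa using hT x hx
  · simpa using hr

lemma Submodular.le_add_sum_singleton {α : Type*} [DecidableEq α] {f : Finset α → ℝ}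
    (hsub : Submodular f) (hnorm : f ∅ = 0) (hmono : ∀ ⦃S T : Finset α⦄, S ⊆ T → f S ≤ f T)
    (A B : Finset α) : f (A ∪ B) ≤ f A + ∑ x ∈ B, f {x} := by
  induction B using Finset.induction with
  | empty => simp
  | insert x B hxB ih =>
    have hx : f (insert x (A ∪ B)) ≤ f (A ∪ B) + f {x} := by
      by_cases hxAB : x ∈ A ∪ B
      · rw [insert_eq_of_mem hxAB]
        simpa [hnorm] using hmono (empty_subset {x})
      · simpa [hnorm, add_comm] using hsub (empty_subset (A ∪ B)) hxAB
    rw [union_insert, sum_insert hxB]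
    linarith

/-- Let `f` be normalized monotone submodular and `Indep` an independence system with optimum
value `OPT`. For any set `R` of `r` items, the optimum over independent sets avoiding `R` is at
least `OPT − ∑_{k=1}^{r} w_k`, where `w_1 ≥ w_2 ≥ …` are the values of `f` on feasible singletons
in non-increasing order (padded with `0` if fewer than `k` feasible singletons exist). -/
theorem stmt_15 {α : Type*} [DecidableEq α] [Fintype α]
    (f : Finset α → ℝ) (Indep : Finset α → Prop)
    [DecidablePred fun x : α => Indep {x}]
    (hnorm : f ∅ = 0)
    (hmono : ∀ ⦃S T : Finset α⦄, S ⊆ T → f S ≤ f T)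
    (hsub : Submodular f)
    (hempty : Indep ∅)
    (hdown : ∀ ⦃X Y : Finset α⦄, X ⊆ Y → Indep Y → Indep X)
    (OPT : ℝ)
    (hOPTub : ∀ S : Finset α, Indep S → f S ≤ OPT)
    (hOPTmem : ∃ S : Finset α, Indep S ∧ f S = OPT)
    (R : Finset α) :
    ∃ S : Finset α, Indep S ∧ S ∩ R = ∅ ∧
      OPT - ∑ k ∈ Finset.range R.card, topVal f (fun x : α => Indep {x}) k ≤ f S := by
  obtain ⟨S, hS, rfl⟩ := hOPTmem
  refine ⟨S \ R, hdown sdiff_subset hS, sdiff_inter_self R S, ?_⟩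
  have hloss : f S ≤ f (S \ R) + ∑ x ∈ S ∩ R, f {x} := by
    simpa only [sdiff_union_inter] using hsub.le_add_sum_singleton hnorm hmono (S \ R) (S ∩ R)
  have hfeasible : ∀ x ∈ S ∩ R, Indep {x} := fun x hx =>
    hdown (singleton_subset_iff.mpr (mem_inter.mp hx).1) hS
  have htop := sum_le_sum_topVal (f := f)
    (fun x _ => by simpa [hnorm] using hmono (empty_subset {x})) hfeasible
    (card_le_card inter_subset_right)
  linarith
end

section
/- Let f be a normalized monotone submodular function on a finite set A with |A| = n, let k ∈ {1,…,n}, let OPT be an optimal solution among k-element subsets of A, and let GRE = {g_1, …, g_k} be the set built by the greedy algorithm that for k steps adds an element of A \ GRE of maximum marginal value with respect to the current set. Then the marginal value of the k-th greedy element satisfies f(g_k | {g_1, …, g_{k−1}}) ≥ (f(OPT) − f(GRE)) / k. -/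
open Finset

lemma sub_sum {α : Type*} [DecidableEq α] (f : Finset α → ℝ)
    (hsub : Submodular f) (S : Finset α) :
    ∀ D : Finset α, Disjoint D S →
      f (S ∪ D) - f S ≤ ∑ x ∈ D, (f (insert x S) - f S) := by
  intro D
  induction D using Finset.induction_on with
  | empty => simp
  | @insert a D ha ih =>
    intro hdisj
    have hdisj' : Disjoint D S := (Finset.disjoint_insert_left.mp hdisj).2
    have haS : a ∉ S := (Finset.disjoint_insert_left.mp hdisj).1
    have haSD : a ∉ S ∪ D := by simp [haS, ha]
    have h1 : f (insert a (S ∪ D)) - f (S ∪ D) ≤ f (insert a S) - f S :=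
      hsub Finset.subset_union_left haSD
    have h2 := ih hdisj'
    rw [Finset.sum_insert ha]
    have : S ∪ insert a D = insert a (S ∪ D) := by
      ext x; simp [or_comm, or_assoc, or_left_comm]
    rw [this]
    linarith

/-- Let `f` be a normalized monotone submodular function on a finite ground set of `n` elements,
`1 ≤ k ≤ n`, `OPT` an optimal `k`-element subset, and `GRE = {g 0, …, g (k−1)}` the set built by
the greedy algorithm that in each step adds an unused element of maximum marginal value. Then the
marginal value of the `k`-th greedy element satisfies
`f(g_k | {g_1, …, g_{k−1}}) ≥ (f(OPT) − f(GRE)) / k`. -/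
theorem stmt_16 {α : Type*} [DecidableEq α] [Fintype α]
    (f : Finset α → ℝ) (n k : ℕ)
    (hcardα : Fintype.card α = n) (hk1 : 1 ≤ k) (hkn : k ≤ n)
    (hnorm : f ∅ = 0)
    (hmono : ∀ ⦃S T : Finset α⦄, S ⊆ T → f S ≤ f T)
    (hsub : Submodular f)
    (g : ℕ → α)
    (hnew : ∀ r < k, g r ∉ solAt g r)
    (hgreedy : ∀ r < k, ∀ x : α, x ∉ solAt g r →
      f (insert x (solAt g r)) - f (solAt g r) ≤
        f (insert (g r) (solAt g r)) - f (solAt g r))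
    (OPT : Finset α) (hOPTcard : OPT.card = k)
    (hOPTmax : ∀ S : Finset α, S.card = k → f S ≤ f OPT) :
    (f OPT - f (solAt g k)) / (k : ℝ) ≤
      f (insert (g (k - 1)) (solAt g (k - 1))) - f (solAt g (k - 1)) := by
  have hkk : k - 1 < k := Nat.sub_lt hk1 one_pos
  set S := solAt g (k - 1) with hS
  set δ := f (insert (g (k - 1)) S) - f S with hδ
  have hδ0 : 0 ≤ δ := by
    have := hmono (Finset.subset_insert (g (k-1)) S)
    linarith
  have hxδ : ∀ x ∉ S, f (insert x S) - f S ≤ δ := fun x hx => hgreedy (k-1) hkk x hx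
  have hsolk : solAt g k = insert (g (k - 1)) S := by
    rw [hS]
    unfold solAt
    rw [show k = (k-1)+1 by omega, Finset.range_add_one, Finset.image_insert]
    simp [Nat.add_sub_cancel]
  have hkey : f OPT - f S ≤ (k : ℝ) * δ := by
    have hdisj : Disjoint (OPT \ S) S := Finset.sdiff_disjoint
    have h1 := sub_sum f hsub S (OPT \ S) hdisj
    have h2 : f OPT ≤ f (S ∪ (OPT \ S)) := hmono (by
      intro x hx
      simp only [Finset.mem_union, Finset.mem_sdiff]
      by_cases h : x ∈ S <;> simp [h, hx])
    have h3 : ∑ x ∈ OPT \ S, (f (insert x S) - f S) ≤ (OPT \ S).card * δ := by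
      calc ∑ x ∈ OPT \ S, (f (insert x S) - f S) ≤ ∑ _x ∈ OPT \ S, δ :=
            Finset.sum_le_sum (fun x hx => hxδ x (Finset.mem_sdiff.mp hx).2)
        _ = (OPT \ S).card * δ := by rw [Finset.sum_const, nsmul_eq_mul]
    have hcard : ((OPT \ S).card : ℝ) ≤ (k : ℝ) := by
      have : (OPT \ S).card ≤ OPT.card := Finset.card_le_card (Finset.sdiff_subset)
      exact_mod_cast this.trans_eq hOPTcard
    nlinarith
  rw [hsolk, div_le_iff₀ (by positivity : (0:ℝ) < (k:ℝ))]
  nlinarith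
end

section
/- (Corollary 7.2) Let M be a finite set of goods and let each of n agents i have a normalized monotone submodular valuation v_i : 2^M → ℝ and a cardinality constraint I_i = {S ⊆ M : |S| ≤ k_i}. Then there exists an allocation A = (A_1, …, A_n) of pairwise disjoint sets with |A_i| ≤ k_i for all i, such that: (1) for every pair of agents i, j with A_j ≠ ∅ there is some g ∈ A_j such that v_i(A_i) ≥ (1/2) · v_i(A'_j) for every A'_j ⊆ A_j \ {g} with |A'_j| ≤ k_i (and v_i(A_i) ≥ (1/2) · v_i(A'_j) for every A'_j ⊆ A_j with |A'_j| ≤ k_i when A_j = ∅); and (2) either A_1 ∪ … ∪ A_n = M or |A_i| = k_i for every agent i. -/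
/-!
Round-robin greedy picking: while some good is unallocated and some agent is below its quota, the
agent with the fewest goods among those below quota takes an available good of largest marginal
value for it. The invariant: for `i ≠ j` and any set `B` of at most `k i` goods of `A j` other
than `j`'s first pick, the marginal values over `A i` of the goods of `B` add up to at most the
value for `i` of its first `|B|` picks. It survives a pick `g` of `j` because `i` has already made
at least `|B|` picks (this is where `j`'s first pick is discarded) and `g` was available at each of
them, so by submodularity its marginal value over `A i` is at most the gain of `i`'s `|B|`-th
pick. Submodularity then also gives `v i B ≤ v i (A i ∪ B) ≤ 2 · v i (A i)`.
-/
open Finset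

namespace RoundRobin

variable {α : Type*} [DecidableEq α]

lemma _root_.List.toFinset_take_subset (P : List α) (m : ℕ) :
    (P.take m).toFinset ⊆ P.toFinset := by
  intro a
  simpa only [List.mem_toFinset] using fun h => (List.take_prefix m P).subset h

lemma _root_.List.toFinset_take_subset_take_append (P Q : List α) (m : ℕ) :
    (P.take m).toFinset ⊆ ((P ++ Q).take m).toFinset := by
  intro a
  simpa only [List.mem_toFinset] using fun h => ((List.prefix_append P Q).take m).subset h

def marginal (f : Finset α → ℝ) (S : Finset α) (b : α) : ℝ := f (insert b S) - f S

lemma le_add_sum_marginal {f : Finset α → ℝ} (hmono : Monotone f) (hsub : Submodular f)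
    (A B : Finset α) : f (A ∪ B) ≤ f A + ∑ b ∈ B, marginal f A b := by
  induction B using Finset.induction_on with
  | empty => simp
  | @insert b B hb ih =>
    rw [union_insert, sum_insert hb]
    by_cases hAB : b ∈ A ∪ B
    · have : 0 ≤ marginal f A b := sub_nonneg.mpr (hmono (subset_insert b A))
      rw [insert_eq_of_mem hAB]
      linarith
    · have : marginal f (A ∪ B) b ≤ marginal f A b := hsub subset_union_left hAB
      unfold marginal at *
      linarith

def IsGreedyList (f : Finset α → ℝ) (P : List α) (U : Finset α) : Prop :=
  ∀ m < P.length, ∀ b ∈ U, f (insert b (P.take m).toFinset) ≤ f (P.take (m + 1)).toFinset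

namespace IsGreedyList

variable {f : Finset α → ℝ} {P : List α} {U : Finset α}

lemma mono {V : Finset α} (h : IsGreedyList f P U) (hVU : V ⊆ U) : IsGreedyList f P V :=
  fun m hm b hb => h m hm b (hVU hb)

lemma append_singleton {g : α} (h : IsGreedyList f P U)
    (hg : ∀ b ∈ U, f (insert b P.toFinset) ≤ f (insert g P.toFinset)) :
    IsGreedyList f (P ++ [g]) U := by
  intro m hm b hb
  rw [List.length_append, List.length_singleton] at hm
  rcases Nat.lt_or_ge m P.length with hlt | hge
  · rw [List.take_append_of_le_length hlt.le, List.take_append_of_le_length hlt]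
    exact h m hlt b hb
  · obtain rfl : m = P.length := by omega
    rw [List.take_left' rfl, List.take_of_length_le (by simp), List.toFinset_append]
    simpa [union_comm] using hg b hb

end IsGreedyList

def PrefixBoundsMarginals (f : Finset α → ℝ) (P : List α) (S : Finset α) (c : ℕ) : Prop :=
  ∀ B ⊆ S, B.card ≤ c → ∑ b ∈ B, marginal f P.toFinset b ≤ f (P.take B.card).toFinset

namespace PrefixBoundsMarginals

variable {f : Finset α → ℝ} {P : List α} {S : Finset α} {c : ℕ}

lemma of_empty (h0 : f ∅ = 0) : PrefixBoundsMarginals f P ∅ c := by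
  intro B hB _
  simp [subset_empty.mp hB, h0]

lemma insert (hsub : Submodular f) (h : PrefixBoundsMarginals f P S c) {U : Finset α} {g : α}
    (hgreedy : IsGreedyList f P U) (hgU : g ∈ U) (hgP : g ∉ P)
    (hlen : min c (S.card + 1) ≤ P.length) :
    PrefixBoundsMarginals f P (insert g S) c := by
  intro B hB hBc
  by_cases hgB : g ∈ B
  · have hBS : B.erase g ⊆ S := fun b hb => by
      obtain ⟨hbg, hbB⟩ := mem_erase.mp hb
      exact (mem_insert.mp (hB hbB)).resolve_left hbg
    set m := (B.erase g).card
    have hm : B.card = m + 1 := (card_erase_add_one hgB).symm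
    have hmP : m < P.length := by
      have := card_le_card hBS
      omega
    have hprefix := h (B.erase g) hBS (by omega)
    -- `g` was a candidate when entry `m` of `P` was chosen
    have hstep : marginal f P.toFinset g ≤ f (P.take (m + 1)).toFinset - f (P.take m).toFinset :=
      (hsub (P.toFinset_take_subset m) (by simpa using hgP)).trans
        (sub_le_sub_right (hgreedy m hmP g hgU) _)
    rw [← sum_erase_add B _ hgB, hm]
    linarith
  · exact h B (fun b hb => (mem_insert.mp (hB hb)).resolve_left (ne_of_mem_of_not_mem hb hgB))
      hBc

lemma append (hmono : Monotone f) (hsub : Submodular f) (h : PrefixBoundsMarginals f P S c)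
    {Q : List α} (hdisj : ∀ b ∈ S, b ∉ P ++ Q) :
    PrefixBoundsMarginals f (P ++ Q) S c := by
  intro B hB hBc
  have hPQ : P.toFinset ⊆ (P ++ Q).toFinset := by
    rw [List.toFinset_append]; exact subset_union_left
  calc ∑ b ∈ B, marginal f (P ++ Q).toFinset b
      ≤ ∑ b ∈ B, marginal f P.toFinset b :=
        sum_le_sum fun b hb => hsub hPQ (by simpa using hdisj b (hB hb))
    _ ≤ f (P.take B.card).toFinset := h B hB hBc
    _ ≤ f ((P ++ Q).take B.card).toFinset := hmono (P.toFinset_take_subset_take_append Q _)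

lemma le_two_mul (hmono : Monotone f) (hsub : Submodular f) (h : PrefixBoundsMarginals f P S c)
    {B : Finset α} (hB : B ⊆ S) (hBc : B.card ≤ c) : f B ≤ 2 * f P.toFinset := by
  have := le_add_sum_marginal hmono hsub P.toFinset B
  have := h B hB hBc
  have : f B ≤ f (P.toFinset ∪ B) := hmono subset_union_right
  have : f (P.take B.card).toFinset ≤ f P.toFinset := hmono (P.toFinset_take_subset _)
  linarith

end PrefixBoundsMarginals

variable [Fintype α] {n : ℕ}

def unpicked (p : Fin n → List α) : Finset α := univ.filter fun a => ∀ i, a ∉ p i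

@[simp]
lemma mem_unpicked {p : Fin n → List α} {a : α} : a ∈ unpicked p ↔ ∀ i, a ∉ p i := by
  simp [unpicked]

lemma unpicked_update_append {p : Fin n → List α} (x : Fin n) (g : α) :
    unpicked (Function.update p x (p x ++ [g])) = (unpicked p).erase g := by
  ext a
  simp only [mem_unpicked, mem_erase, Function.update_apply]
  constructor
  · intro h
    refine ⟨fun hag => by simpa [hag] using h x, fun i hi => h i ?_⟩
    split_ifs with hix
    · exact List.mem_append_left _ (hix ▸ hi)
    · exact hi
  · rintro ⟨hag, h⟩ i
    split_ifs with hix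
    · simpa [hag] using hix ▸ h i
    · exact h i

/-- `p i` lists the goods picked so far by agent `i`, in the order they were picked. -/
structure IsGreedyPicking (v : Fin n → Finset α → ℝ) (k : Fin n → ℕ) (p : Fin n → List α) :
    Prop where
  nodup : ∀ i, (p i).Nodup
  disjoint : Pairwise fun i j => (p i).Disjoint (p j)
  length_le : ∀ i, (p i).length ≤ k i
  greedy : ∀ i, IsGreedyList (v i) (p i) (unpicked p)
  envy : Pairwise fun i j => PrefixBoundsMarginals (v i) (p i) (p j).tail.toFinset (k i)

variable {v : Fin n → Finset α → ℝ} {k : Fin n → ℕ}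

lemma isGreedyPicking_nil (hnorm : ∀ i, v i ∅ = 0) : IsGreedyPicking v k fun _ => [] where
  nodup _ := List.nodup_nil
  disjoint _ _ _ := List.disjoint_nil_left _
  length_le _ := Nat.zero_le _
  greedy _ m hm := absurd hm (Nat.not_lt_zero m)
  envy i _ _ := PrefixBoundsMarginals.of_empty (hnorm i)

namespace IsGreedyPicking

variable {p : Fin n → List α}

lemma update_append (hmono : ∀ i, Monotone (v i)) (hsub : ∀ i, Submodular (v i))
    (hp : IsGreedyPicking v k p) {x : Fin n} {g : α} (hg : g ∈ unpicked p)
    (hx : (p x).length < k x) (hbal : ∀ i, min (k i) (p x).length ≤ (p i).length)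
    (hmax : ∀ b ∈ unpicked p, v x (insert b (p x).toFinset) ≤ v x (insert g (p x).toFinset)) :
    IsGreedyPicking v k (Function.update p x (p x ++ [g])) := by
  have hgp : ∀ i, g ∉ p i := mem_unpicked.mp hg
  have hU : unpicked (Function.update p x (p x ++ [g])) ⊆ unpicked p := by
    rw [unpicked_update_append]; exact erase_subset g _
  refine ⟨fun i => ?_, fun i j hij => ?_, fun i => ?_, fun i => ?_, fun i j hij => ?_⟩
  · rcases eq_or_ne i x with rfl | hix
    · simpa [← List.concat_eq_append] using (hp.nodup i).concat (hgp i)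
    · simpa [hix] using hp.nodup i
  · rcases eq_or_ne i x with rfl | hix
    · simpa [hij.symm, hp.disjoint hij] using hgp j
    rcases eq_or_ne j x with rfl | hjx
    · simpa [hix, hp.disjoint hij] using hgp i
    · simpa [hix, hjx] using hp.disjoint hij
  · rcases eq_or_ne i x with rfl | hix
    · simpa using hx
    · simpa [hix] using hp.length_le i
  · rcases eq_or_ne i x with rfl | hix
    · simpa using ((hp.greedy i).append_singleton hmax).mono hU
    · simpa [hix] using (hp.greedy i).mono hU
  · rcases eq_or_ne i x with rfl | hix
    · have hdisj : ∀ b ∈ (p j).tail.toFinset, b ∉ p i ++ [g] := fun b hb => by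
        have hbj : b ∈ p j := List.mem_of_mem_tail (List.mem_toFinset.mp hb)
        simp only [List.mem_append, List.mem_singleton, not_or]
        exact ⟨(hp.disjoint hij).symm hbj, ne_of_mem_of_not_mem hbj (hgp j)⟩
      simpa [hij.symm] using (hp.envy hij).append (hmono i) (hsub i) hdisj
    rcases eq_or_ne j x with rfl | hjx
    · simp only [Function.update_self, Function.update_of_ne hix]
      rcases eq_or_ne (p j) [] with hnil | hne
      · simpa [hnil] using hp.envy hij
      have hlen : min (k i) ((p j).tail.toFinset.card + 1) ≤ (p i).length := by
        have := List.toFinset_card_le (p j).tail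
        have := List.length_pos_of_ne_nil hne
        have := hbal i
        simp only [List.length_tail] at *
        omega
      simpa [List.tail_append_of_ne_nil hne, List.toFinset_append, union_comm] using
        (hp.envy hij).insert (hsub i) (hp.greedy i) hg (hgp i) hlen
    · simpa [hix, hjx] using hp.envy hij

lemma exists_card_unpicked_lt (hmono : ∀ i, Monotone (v i)) (hsub : ∀ i, Submodular (v i))
    (hp : IsGreedyPicking v k p) (hU : (unpicked p).Nonempty) (hopen : ∃ x, (p x).length < k x) :
    ∃ q, IsGreedyPicking v k q ∧ (unpicked q).card < (unpicked p).card := by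
  -- letting the agent with fewest goods among those below quota pick keeps the picking balanced
  obtain ⟨x, hx, hxmin⟩ := (univ.filter fun i => (p i).length < k i).exists_min_image
    (fun i => (p i).length) (by simpa [Finset.Nonempty] using hopen)
  obtain ⟨g, hg, hgmax⟩ :=
    (unpicked p).exists_max_image (fun b => v x (insert b (p x).toFinset)) hU
  have hbal : ∀ i, min (k i) (p x).length ≤ (p i).length := fun i => by
    by_cases hi : (p i).length < k i
    · exact (min_le_right _ _).trans (hxmin i (by simpa using hi))
    · exact (min_le_left _ _).trans (not_lt.mp hi)
  refine ⟨_, hp.update_append hmono hsub hg (by simpa using hx) hbal hgmax, ?_⟩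
  rw [unpicked_update_append]
  exact card_erase_lt_of_mem hg

lemma half_mul_le_of_subset_tail (hnorm : ∀ i, v i ∅ = 0) (hmono : ∀ i, Monotone (v i))
    (hsub : ∀ i, Submodular (v i)) (hp : IsGreedyPicking v k p) {i j : Fin n} {B : Finset α}
    (hB : B ⊆ (p j).tail.toFinset) (hBk : B.card ≤ k i) :
    (1 / 2 : ℝ) * v i B ≤ v i (p i).toFinset := by
  rcases eq_or_ne i j with rfl | hij
  · have : 0 ≤ v i B := hnorm i ▸ hmono i (empty_subset B)
    have : v i B ≤ v i (p i).toFinset := hmono i fun b hb => by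
      simpa using List.mem_of_mem_tail (List.mem_toFinset.mp (hB hb))
    linarith
  · have := (hp.envy hij).le_two_mul (hmono i) (hsub i) hB hBk
    linarith

end IsGreedyPicking

lemma exists_isGreedyPicking_terminal (k : Fin n → ℕ) (hnorm : ∀ i, v i ∅ = 0)
    (hmono : ∀ i, Monotone (v i)) (hsub : ∀ i, Submodular (v i)) :
    ∃ p, IsGreedyPicking v k p ∧ (unpicked p = ∅ ∨ ∀ i, k i ≤ (p i).length) := by
  obtain ⟨p, hp, hmin⟩ := (measure fun p : Fin n → List α => (unpicked p).card).wf.has_min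
    {p | IsGreedyPicking v k p} ⟨_, isGreedyPicking_nil hnorm⟩
  refine ⟨p, hp, ?_⟩
  by_contra! h
  obtain ⟨hU, x, hx⟩ := h
  obtain ⟨q, hq, hlt⟩ := hp.exists_card_unpicked_lt hmono hsub hU ⟨x, hx⟩
  exact hmin q hq hlt

end RoundRobin

/-- Corollary 7.2: for `n` agents with normalized monotone submodular valuations `v i` and
cardinality constraints `|S| ≤ k i` over a finite set of goods, there exists an allocation
`A 0, …, A (n−1)` of pairwise disjoint sets with `|A i| ≤ k i` such that (1) for every pair of
agents `i, j`: if `A j` is nonempty there is some `g ∈ A j` with `v i (A i) ≥ (1/2) · v i B` for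
every `B ⊆ A j \ {g}` with `|B| ≤ k i`, and if `A j = ∅` then `v i (A i) ≥ (1/2) · v i B` for
every `B ⊆ A j` with `|B| ≤ k i`; and (2) either all goods are allocated or every agent's
cardinality constraint is met with equality. -/
theorem stmt_19 {α : Type*} [DecidableEq α] [Fintype α] (n : ℕ)
    (v : Fin n → Finset α → ℝ) (k : Fin n → ℕ)
    (hnorm : ∀ i, v i ∅ = 0)
    (hmono : ∀ i, ∀ ⦃S T : Finset α⦄, S ⊆ T → v i S ≤ v i T)
    (hsub : ∀ i, Submodular (v i)) :
    ∃ A : Fin n → Finset α,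
      (∀ i j, i ≠ j → Disjoint (A i) (A j)) ∧
      (∀ i, (A i).card ≤ k i) ∧
      (∀ i j : Fin n,
        ((A j).Nonempty → ∃ g ∈ A j, ∀ B ⊆ (A j).erase g, B.card ≤ k i →
          (1 / 2 : ℝ) * v i B ≤ v i (A i)) ∧
        (A j = ∅ → ∀ B ⊆ A j, B.card ≤ k i → (1 / 2 : ℝ) * v i B ≤ v i (A i))) ∧
      (Finset.univ.biUnion A = (Finset.univ : Finset α) ∨ ∀ i, (A i).card = k i) := by
  obtain ⟨p, hp, hstuck⟩ := RoundRobin.exists_isGreedyPicking_terminal k hnorm hmono hsub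
  refine ⟨fun i => (p i).toFinset, fun i j hij => ?_, fun i => ?_,
    fun i j => ⟨fun hne => ?_, fun hempty B hB hBk => ?_⟩, ?_⟩
  · exact List.disjoint_toFinset_iff_disjoint.mpr (hp.disjoint hij)
  · exact (List.toFinset_card_le _).trans (hp.length_le i)
  · obtain ⟨g, l, hgl⟩ := List.exists_cons_of_ne_nil ((List.toFinset_nonempty_iff _).mp hne)
    have hgl' : g ∉ l := (List.nodup_cons.mp (hgl ▸ hp.nodup j)).1
    refine ⟨g, by simp [hgl], fun B hB hBk =>
      hp.half_mul_le_of_subset_tail hnorm hmono hsub (j := j) ?_ hBk⟩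
    simpa [hgl, erase_insert (List.mem_toFinset.not.mpr hgl')] using hB
  · rw [hempty, subset_empty] at hB
    exact hp.half_mul_le_of_subset_tail hnorm hmono hsub (j := j) (hB ▸ empty_subset _) hBk
  · refine hstuck.imp (fun hU => eq_univ_of_forall fun a => ?_) (fun hfull i => ?_)
    · have : a ∉ RoundRobin.unpicked p := hU ▸ notMem_empty a
      simpa using this
    · rw [List.toFinset_card_of_nodup (hp.nodup i)]
      exact le_antisymm (hp.length_le i) (hfull i)
end
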